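/- arXiv:1112.0476 — 6 statements merged into one kernel-verified Lean document; each statement's English description precedes it below -/
import Mathlib

section
/- For α ∈ (1,2) and β = α - 1, the principal value integral ∫_{z ≥ -1} (|1+z|^β - 1) / |z|^{1+α} dz equals 0. -/
/-!
On each side of the origin the integrand has an explicit antiderivative: for `z > 0` it is
`(1 - (1 + z)^α) / (α z^α)`, for `-1 < z < 0` it is `((1 + z)^α - 1) / (α (-z)^α)`. Both take the
value `-1/α` at the outer ends (`z → ∞` and `z = -1`), so these cancel and the truncated integral is
`((1 + b)^α + (1 - b)^α - 2) / (α b^α)`. By Bernoulli's inequality in both directions the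
numerator lies between `0` and `2 (α - 1) b²`, hence the quotient is `O(b^(2 - α))`, which tends to
`0` because `α < 2`.
-/

open MeasureTheory Filter Topology Set

noncomputable section

def censoredIntegrand (α z : ℝ) : ℝ :=
  (|1 + z| ^ (α - 1) - 1) / |z| ^ (1 + α)

variable {α : ℝ}

lemma continuousOn_censoredIntegrand (hα : 1 ≤ α) : ContinuousOn (censoredIntegrand α) {0}ᶜ := by
  refine ContinuousOn.div ?_ ?_ fun z hz => ?_
  · exact ((continuous_const.add continuous_id).abs.rpow_const
      fun _ => Or.inr (by linarith)).sub continuous_const |>.continuousOn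
  · exact (continuous_abs.rpow_const fun _ => Or.inr (by linarith)).continuousOn
  · exact (Real.rpow_pos_of_pos (abs_pos.mpr hz) _).ne'

lemma censoredIntegrand_nonneg (hα : 1 ≤ α) {z : ℝ} (hz : 0 < z) : 0 ≤ censoredIntegrand α z := by
  have h1 : 1 ≤ |1 + z| ^ (α - 1) := by
    rw [abs_of_pos (by linarith)]
    exact Real.one_le_rpow (by linarith) (by linarith)
  exact div_nonneg (by linarith) (Real.rpow_nonneg (abs_nonneg z) _)

lemma hasDerivAt_one_add_rpow (p : ℝ) {z : ℝ} (hz : -1 < z) :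
    HasDerivAt (fun z : ℝ => (1 + z) ^ p) (p * (1 + z) ^ p / (1 + z)) z := by
  have h := (Real.hasDerivAt_rpow_const (p := p) (Or.inl (by linarith : 1 + z ≠ 0))).comp z
    ((hasDerivAt_id z).const_add 1)
  rwa [Real.rpow_sub (by linarith), Real.rpow_one, mul_one, ← mul_div_assoc] at h

lemma hasDerivAt_censoredAntideriv_of_pos (hα : α ≠ 0) {z : ℝ} (hz : 0 < z) :
    HasDerivAt (fun z : ℝ => (1 - (1 + z) ^ α) / (α * z ^ α)) (censoredIntegrand α z) z := by
  have h1z : 0 < 1 + z := by linarith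
  have hpow : HasDerivAt (fun z : ℝ => z ^ α) (α * z ^ α / z) z := by
    simpa only [Real.rpow_sub hz, Real.rpow_one, mul_div_assoc] using
      Real.hasDerivAt_rpow_const (p := α) (Or.inl hz.ne')
  have hzα : 0 < z ^ α := Real.rpow_pos_of_pos hz α
  refine (((hasDerivAt_one_add_rpow α (by linarith)).const_sub 1).div (hpow.const_mul α)
    (by positivity)).congr_deriv ?_
  rw [censoredIntegrand, abs_of_pos h1z, abs_of_pos hz, Real.rpow_sub h1z, Real.rpow_add hz,
    Real.rpow_one, Real.rpow_one]
  field_simp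
  ring

lemma hasDerivAt_censoredAntideriv_of_neg (hα : α ≠ 0) {z : ℝ} (hz1 : -1 < z) (hz0 : z < 0) :
    HasDerivAt (fun z : ℝ => ((1 + z) ^ α - 1) / (α * (-z) ^ α)) (censoredIntegrand α z) z := by
  have h1z : 0 < 1 + z := by linarith
  have hw : 0 < -z := by linarith
  have hz : z ≠ 0 := hz0.ne
  have hpow : HasDerivAt (fun z : ℝ => (-z) ^ α) (α * (-z) ^ α / z) z := by
    have h := (Real.hasDerivAt_rpow_const (p := α) (Or.inl hw.ne')).comp z (hasDerivAt_neg z)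
    rw [Real.rpow_sub hw, Real.rpow_one] at h
    exact h.congr_deriv (by field_simp)
  have hwα : 0 < (-z) ^ α := Real.rpow_pos_of_pos hw α
  refine (((hasDerivAt_one_add_rpow α hz1).sub_const 1).div (hpow.const_mul α)
    (by positivity)).congr_deriv ?_
  rw [censoredIntegrand, abs_of_pos h1z, abs_of_neg hz0, Real.rpow_sub h1z, Real.rpow_add hw,
    Real.rpow_one, Real.rpow_one]
  field_simp
  ring

lemma tendsto_censoredAntideriv_atTop (hα : 0 < α) :
    Tendsto (fun z : ℝ => (1 - (1 + z) ^ α) / (α * z ^ α)) atTop (𝓝 (-(1 / α))) := by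
  have hinv : Tendsto (fun z : ℝ => (z⁻¹ + 1) ^ α) atTop (𝓝 1) := by
    have h := (tendsto_inv_atTop_zero.add_const (1 : ℝ)).rpow_const (p := α) (Or.inr hα.le)
    simpa using h
  have hlim := ((tendsto_rpow_neg_atTop hα).sub hinv).div_const α
  rw [zero_sub, neg_div] at hlim
  refine hlim.congr' ?_
  filter_upwards [eventually_gt_atTop 0] with z hz
  have hzα : 0 < z ^ α := Real.rpow_pos_of_pos hz α
  rw [Real.rpow_neg hz.le, show z⁻¹ + 1 = (1 + z) / z by field_simp,
    Real.div_rpow (by linarith) hz.le]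
  field_simp

lemma integrableOn_and_integral_Ioi_censoredIntegrand (hα : 1 ≤ α) {b : ℝ} (hb : 0 < b) :
    IntegrableOn (censoredIntegrand α) (Ioi b) ∧
      ∫ z in Ioi b, censoredIntegrand α z = -(1 / α) - (1 - (1 + b) ^ α) / (α * b ^ α) := by
  have hderiv : ∀ z ∈ Ici b, HasDerivAt (fun z : ℝ => (1 - (1 + z) ^ α) / (α * z ^ α))
      (censoredIntegrand α z) z :=
    fun z hz => hasDerivAt_censoredAntideriv_of_pos (by linarith) (hb.trans_le hz)
  have hnonneg : ∀ z ∈ Ioi b, 0 ≤ censoredIntegrand α z :=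
    fun z hz => censoredIntegrand_nonneg hα (hb.trans hz)
  have hlim := tendsto_censoredAntideriv_atTop (by linarith : 0 < α)
  exact ⟨integrableOn_Ioi_deriv_of_nonneg' hderiv hnonneg hlim,
    integral_Ioi_of_hasDerivAt_of_nonneg' hderiv hnonneg hlim⟩

lemma integrableOn_and_integral_Ioo_censoredIntegrand (hα : 1 ≤ α) {b : ℝ} (hb0 : 0 < b) (hb1 : b ≤ 1) :
    IntegrableOn (censoredIntegrand α) (Ioo (-1) (-b)) ∧
      ∫ z in Ioo (-1) (-b), censoredIntegrand α z = ((1 - b) ^ α - 1) / (α * b ^ α) + 1 / α := by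
  have hle : (-1 : ℝ) ≤ -b := by linarith
  have hcont : ContinuousOn (censoredIntegrand α) (Icc (-1) (-b)) :=
    (continuousOn_censoredIntegrand hα).mono fun z hz => by
      simp only [mem_Icc] at hz; simp only [mem_compl_iff, mem_singleton_iff]; linarith
  have hanti : ContinuousOn (fun z : ℝ => ((1 + z) ^ α - 1) / (α * (-z) ^ α)) (Icc (-1) (-b)) := by
    refine ContinuousOn.div ?_ ?_ fun z hz => ?_
    · exact ((continuous_const.add continuous_id).rpow_const
        fun _ => Or.inr (by linarith)).sub continuous_const |>.continuousOn
    · exact (continuous_const.mul (continuous_neg.rpow_const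
        fun _ => Or.inr (by linarith))).continuousOn
    · have := Real.rpow_pos_of_pos (by linarith [hz.2] : 0 < -z) α
      have : 0 < α := by linarith
      positivity
  refine ⟨(hcont.integrableOn_compact isCompact_Icc).mono_set Ioo_subset_Icc_self, ?_⟩
  rw [← integral_Ioc_eq_integral_Ioo, ← intervalIntegral.integral_of_le hle,
    intervalIntegral.integral_eq_sub_of_hasDerivAt_of_le hle hanti
      (fun z hz => hasDerivAt_censoredAntideriv_of_neg (by linarith) hz.1 (by linarith [hz.2]))
      ((uIcc_of_le hle ▸ hcont).intervalIntegrable)]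
  rw [add_neg_cancel, Real.zero_rpow (by linarith), neg_neg, neg_neg, Real.one_rpow,
    ← sub_eq_add_neg]
  ring

lemma setIntegral_censoredIntegrand_eq (hα : 1 ≤ α) {b : ℝ} (hb0 : 0 < b) (hb1 : b ≤ 1) :
    ∫ z in {z : ℝ | -1 < z ∧ b < |z|}, censoredIntegrand α z
      = ((1 + b) ^ α + (1 - b) ^ α - 2) / (α * b ^ α) := by
  have hset : {z : ℝ | -1 < z ∧ b < |z|} = Ioo (-1) (-b) ∪ Ioi b := by
    ext z
    simp only [mem_ofPred_eq, mem_union, mem_Ioo, mem_Ioi, lt_abs]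
    grind
  have hdisj : Disjoint (Ioo (-1) (-b)) (Ioi b) :=
    disjoint_left.mpr fun z hz hz' => by simp only [mem_Ioo, mem_Ioi] at hz hz'; linarith
  obtain ⟨hintL, hL⟩ := integrableOn_and_integral_Ioo_censoredIntegrand hα hb0 hb1
  obtain ⟨hintR, hR⟩ := integrableOn_and_integral_Ioi_censoredIntegrand hα hb0
  rw [hset, setIntegral_union hdisj measurableSet_Ioi hintL hintR, hL, hR]
  have : 0 < b ^ α := Real.rpow_pos_of_pos hb0 α
  have : α ≠ 0 := by linarith
  field_simp
  ring

lemma one_add_rpow_le_of_le_two (hα1 : 1 ≤ α) (hα2 : α ≤ 2) {b : ℝ} (hb : -1 ≤ b) :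
    (1 + b) ^ α ≤ (1 + b) * (1 + (α - 1) * b) := by
  have h1b : 0 ≤ 1 + b := by linarith
  calc (1 + b) ^ α = (1 + b) * (1 + b) ^ (α - 1) := by
        rw [← Real.rpow_one_add' h1b (by linarith), add_sub_cancel]
    _ ≤ (1 + b) * (1 + (α - 1) * b) := mul_le_mul_of_nonneg_left
        (rpow_one_add_le_one_add_mul_self hb (by linarith) (by linarith)) h1b

lemma two_le_one_add_rpow_add_one_sub_rpow (hα : 1 ≤ α) {b : ℝ} (hb : |b| ≤ 1) :
    2 ≤ (1 + b) ^ α + (1 - b) ^ α := by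
  rw [abs_le] at hb
  have h1 := one_add_mul_self_le_rpow_one_add (by linarith : -1 ≤ b) hα
  have h2 := one_add_mul_self_le_rpow_one_add (by linarith : -1 ≤ -b) hα
  rw [← sub_eq_add_neg] at h2
  linarith

lemma one_add_rpow_add_one_sub_rpow_le (hα1 : 1 ≤ α) (hα2 : α ≤ 2) {b : ℝ} (hb : |b| ≤ 1) :
    (1 + b) ^ α + (1 - b) ^ α ≤ 2 + 2 * (α - 1) * b ^ 2 := by
  rw [abs_le] at hb
  have h1 := one_add_rpow_le_of_le_two hα1 hα2 (by linarith : -1 ≤ b)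
  have h2 := one_add_rpow_le_of_le_two hα1 hα2 (by linarith : -1 ≤ -b)
  rw [← sub_eq_add_neg] at h2
  linarith

lemma tendsto_second_difference_div_rpow (hα1 : 1 ≤ α) (hα2 : α < 2) :
    Tendsto (fun b : ℝ => ((1 + b) ^ α + (1 - b) ^ α - 2) / (α * b ^ α)) (𝓝[>] 0) (𝓝 0) := by
  have hα0 : 0 < α := by linarith
  have hbound : Tendsto (fun b : ℝ => 2 * (α - 1) / α * b ^ (2 - α)) (𝓝[>] 0) (𝓝 0) := by
    have h := ((Real.continuousAt_rpow_const 0 (2 - α) (Or.inr (by linarith))).tendsto.mono_left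
      (nhdsWithin_le_nhds (s := Ioi 0))).const_mul (2 * (α - 1) / α)
    rwa [Real.zero_rpow (by linarith), mul_zero] at h
  refine squeeze_zero' ?_ ?_ hbound <;>
    filter_upwards [Ioo_mem_nhdsGT_of_mem ⟨le_rfl, one_pos⟩] with b ⟨hb0, hb1⟩
  all_goals
    have hb : |b| ≤ 1 := by rw [abs_of_pos hb0]; exact hb1.le
    have hbα : 0 < b ^ α := Real.rpow_pos_of_pos hb0 α
  · exact div_nonneg (by linarith [two_le_one_add_rpow_add_one_sub_rpow hα1 hb]) (by positivity)
  · have hsq : b ^ α * b ^ (2 - α) = b ^ 2 := by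
      rw [← Real.rpow_add hb0, add_sub_cancel, Real.rpow_two]
    rw [div_le_iff₀ (by positivity)]
    calc (1 + b) ^ α + (1 - b) ^ α - 2 ≤ 2 * (α - 1) * b ^ 2 := by
          linarith [one_add_rpow_add_one_sub_rpow_le hα1 hα2.le hb]
      _ = 2 * (α - 1) / α * b ^ (2 - α) * (α * b ^ α) := by rw [← hsq]; field_simp

end

/-- For `α ∈ (1,2)` and `β = α - 1`, the principal value integral
`P.V. ∫_{z ≥ -1} (|1+z|^β - 1)/|z|^{1+α} dz = 0`. -/
theorem pv_integral_rpow_sub_one_eq_zero (α β : ℝ) (hα1 : 1 < α) (hα2 : α < 2)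
    (hβ : β = α - 1) :
    Tendsto (fun b : ℝ =>
        ∫ z in {z : ℝ | -1 < z ∧ b < |z|}, (|1 + z| ^ β - 1) / |z| ^ (1 + α))
      (𝓝[>] (0 : ℝ)) (𝓝 0) := by
  subst hβ
  refine (tendsto_second_difference_div_rpow hα1.le hα2).congr' ?_
  filter_upwards [Ioo_mem_nhdsGT_of_mem ⟨le_rfl, one_pos⟩] with b ⟨hb0, hb1⟩
  exact (setIntegral_censoredIntegrand_eq hα1.le hb0 hb1.le).symm
end

section
/- For α ∈ (1,2) and β ∈ (α-1, 1), the principal value integral ∫_{z ≥ -1} (|1+z|^β - 1)/|z|^{1+α} dz is strictly positive; for β ∈ (0, α-1) it is strictly negative. -/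
/-!
Fold the negative half of the domain onto the positive one with the involution `w ↦ -w/(1+w)`
of `(-1, ∞)`, which maps `(b/(1-b), ∞)` onto `(-1, -b)` with Jacobian `(1+w)⁻²`. The integrand
plus its pullback is `((1+w)^β - 1)(1 - (1+w)^(α-1-β)) / w^(1+α)`, which is `O(w^(1-α))` at `0`,
integrable on `(0, ∞)`, and has the sign of `β - (α - 1)`. The truncated integral differs from
the integral of this folded integrand by its integral over `(0, b/(1-b)]` and by the integral of
the original integrand over `(b, b/(1-b)]`, which is `O(b^(2-α))`.
-/

open MeasureTheory Filter Topology Set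

lemma abs_one_add_rpow_sub_one_le {p z : ℝ} (hp : |p| ≤ 1) (hz : 0 ≤ z) :
    |(1 + z) ^ p - 1| ≤ |p| * z := by
  have h1z : (1 : ℝ) ≤ 1 + z := by linarith
  rcases le_or_gt 0 p with hp0 | hp0
  · rw [abs_of_nonneg hp0] at hp ⊢
    have := rpow_one_add_le_one_add_mul_self (by linarith) hp0 hp
    rw [abs_of_nonneg (by linarith [Real.one_le_rpow h1z hp0])]
    linarith
  · rw [abs_of_neg hp0] at hp ⊢
    have hle : (1 + z) ^ p ≤ 1 := Real.rpow_le_one_of_one_le_of_nonpos h1z hp0.le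
    have hpos : 0 < (1 + z) ^ p := Real.rpow_pos_of_pos (by linarith) p
    have hinv : (1 + z) ^ p * (1 + z) ^ (-p) = 1 := by
      rw [← Real.rpow_add (by linarith)]; simp
    have := rpow_one_add_le_one_add_mul_self (s := z) (by linarith) (neg_nonneg.2 hp0.le) hp
    rw [abs_of_nonpos (by linarith)]
    -- `1 - (1+z)^p = (1+z)^p ((1+z)^(-p) - 1) ≤ (1+z)^(-p) - 1`
    nlinarith

lemma setIntegral_pos_of_forall_pos {X : Type*} [MeasurableSpace X] {μ : Measure X}
    {f : X → ℝ} {s : Set X} (hs : MeasurableSet s) (hμs : μ s ≠ 0) (hf : IntegrableOn f s μ)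
    (hpos : ∀ x ∈ s, 0 < f x) : 0 < ∫ x in s, f x ∂μ := by
  rw [setIntegral_pos_iff_support_of_nonneg_ae
    ((ae_restrict_iff' hs).2 (Eventually.of_forall fun x hx => (hpos x hx).le)) hf]
  refine pos_iff_ne_zero.2 fun h => hμs (measure_mono_null (fun x hx => ?_) h)
  exact ⟨(hpos x hx).ne', hx⟩

section IntervalIntegrals

variable {E : Type*} [NormedAddCommGroup E] [NormedSpace ℝ E] {f : ℝ → E} {a : ℝ}

lemma setIntegral_Ioi_eq_setIntegral_Ioc_add {b : ℝ} (hab : a ≤ b) (hf : IntegrableOn f (Ioi a)) :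
    ∫ x in Ioi a, f x = (∫ x in Ioc a b, f x) + ∫ x in Ioi b, f x := by
  rw [← Ioc_union_Ioi_eq_Ioi hab] at hf ⊢
  exact setIntegral_union Ioc_disjoint_Ioi_same measurableSet_Ioi
    (hf.mono_set subset_union_left) (hf.mono_set subset_union_right)

lemma MeasureTheory.IntegrableOn.tendsto_setIntegral_Ioc (hf : IntegrableOn f (Ioi a)) :
    Tendsto (fun c => ∫ x in Ioc a c, f x) (𝓝 a) (𝓝 0) := by
  have hvol : Tendsto (fun c => volume.restrict (Ioi a) (Ioc a c)) (𝓝 a) (𝓝 0) := by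
    simp only [Measure.restrict_eq_self _ Ioc_subset_Ioi_self, Real.volume_Ioc]
    rw [← ENNReal.ofReal_zero, ← sub_self a]
    exact ENNReal.tendsto_ofReal (tendsto_id.sub_const a)
  convert Integrable.tendsto_setIntegral_nhds_zero hf hvol using 2 with c
  rw [Measure.restrict_restrict_of_subset Ioc_subset_Ioi_self]

end IntervalIntegrals

lemma image_Ioi_neg_div_one_add {b : ℝ} (hb0 : 0 < b) (hb1 : b < 1) :
    (fun w : ℝ => -w / (1 + w)) '' Ioi (b / (1 - b)) = Ioo (-1) (-b) := by
  have h1b : 0 < 1 - b := by linarith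
  have hc : 0 < b / (1 - b) := div_pos hb0 h1b
  ext y
  simp only [mem_image, mem_Ioi, mem_Ioo]
  constructor
  · rintro ⟨w, hw, rfl⟩
    have h1w : 0 < 1 + w := by linarith
    rw [div_lt_iff₀ h1b] at hw
    constructor
    · rw [lt_div_iff₀ h1w]; linarith
    · rw [div_lt_iff₀ h1w]; nlinarith
  · rintro ⟨hy1, hyb⟩
    have h1y : 0 < 1 + y := by linarith
    refine ⟨-y / (1 + y), ?_, by field_simp; ring⟩
    rw [div_lt_div_iff₀ h1b h1y]
    nlinarith

lemma injOn_neg_div_one_add : InjOn (fun w : ℝ => -w / (1 + w)) (Ioi (-1)) := by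
  intro a ha b hb hab
  have ha' : 1 + a ≠ 0 := by simp only [mem_Ioi] at ha; linarith
  have hb' : 1 + b ≠ 0 := by simp only [mem_Ioi] at hb; linarith
  simp only at hab
  field_simp at hab
  linarith

lemma hasDerivAt_neg_div_one_add {w : ℝ} (hw : 1 + w ≠ 0) :
    HasDerivAt (fun w : ℝ => -w / (1 + w)) (-((1 + w) ^ 2)⁻¹) w := by
  refine ((hasDerivAt_id' w).neg.div ((hasDerivAt_id' w).const_add 1) hw).congr_deriv ?_
  simp only [Pi.neg_apply]
  field_simp
  ring

section ChangeOfVariables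

variable {E : Type*} [NormedAddCommGroup E] [NormedSpace ℝ E] {b : ℝ}

lemma hasDerivWithinAt_neg_div_one_add_Ioi (hb0 : 0 < b) (hb1 : b < 1) :
    ∀ w ∈ Ioi (b / (1 - b)),
      HasDerivWithinAt (fun w : ℝ => -w / (1 + w)) (-((1 + w) ^ 2)⁻¹) (Ioi (b / (1 - b))) w :=
  fun w hw => (hasDerivAt_neg_div_one_add
    (by have := (div_pos hb0 (sub_pos.2 hb1)).trans hw; linarith)).hasDerivWithinAt

lemma injOn_neg_div_one_add_Ioi (hb0 : 0 < b) (hb1 : b < 1) :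
    InjOn (fun w : ℝ => -w / (1 + w)) (Ioi (b / (1 - b))) :=
  injOn_neg_div_one_add.mono (Ioi_subset_Ioi (by linarith [div_pos hb0 (sub_pos.2 hb1)]))

lemma integrableOn_Ioo_iff_neg_div_one_add (hb0 : 0 < b) (hb1 : b < 1) (g : ℝ → E) :
    IntegrableOn g (Ioo (-1) (-b)) ↔
      IntegrableOn (fun w => ((1 + w) ^ 2)⁻¹ • g (-w / (1 + w))) (Ioi (b / (1 - b))) := by
  rw [← image_Ioi_neg_div_one_add hb0 hb1, integrableOn_image_iff_integrableOn_abs_deriv_smul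
    measurableSet_Ioi (hasDerivWithinAt_neg_div_one_add_Ioi hb0 hb1)
    (injOn_neg_div_one_add_Ioi hb0 hb1)]
  simp only [abs_neg, abs_inv, abs_pow, sq_abs]

lemma setIntegral_Ioo_eq_neg_div_one_add (hb0 : 0 < b) (hb1 : b < 1) (g : ℝ → E) :
    ∫ z in Ioo (-1) (-b), g z =
      ∫ w in Ioi (b / (1 - b)), ((1 + w) ^ 2)⁻¹ • g (-w / (1 + w)) := by
  rw [← image_Ioi_neg_div_one_add hb0 hb1, integral_image_eq_integral_abs_deriv_smul
    measurableSet_Ioi (hasDerivWithinAt_neg_div_one_add_Ioi hb0 hb1)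
    (injOn_neg_div_one_add_Ioi hb0 hb1)]
  simp only [abs_neg, abs_inv, abs_pow, sq_abs]

end ChangeOfVariables

namespace RpowSubOnePV

noncomputable def integrand (α β z : ℝ) : ℝ := (|1 + z| ^ β - 1) / |z| ^ (1 + α)

noncomputable def foldedIntegrand (α β w : ℝ) : ℝ :=
  ((1 + w) ^ β - 1) * (1 - (1 + w) ^ (α - 1 - β)) / w ^ (1 + α)

variable {α β : ℝ}

lemma measurable_integrand : Measurable (integrand α β) := by
  unfold integrand; fun_prop

lemma measurable_foldedIntegrand : Measurable (foldedIntegrand α β) := by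
  unfold foldedIntegrand; fun_prop

lemma integrand_of_pos {z : ℝ} (hz : 0 < z) :
    integrand α β z = ((1 + z) ^ β - 1) / z ^ (1 + α) := by
  rw [integrand, abs_of_pos hz, abs_of_pos (by linarith)]

lemma integrand_nonneg (hβ0 : 0 ≤ β) {z : ℝ} (hz : 0 < z) : 0 ≤ integrand α β z := by
  rw [integrand_of_pos hz]
  have := Real.one_le_rpow (by linarith : (1 : ℝ) ≤ 1 + z) hβ0
  exact div_nonneg (by linarith) (by positivity)

lemma integrand_le (hβ0 : 0 ≤ β) (hβ1 : β ≤ 1) {z : ℝ} (hz : 0 < z) :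
    integrand α β z ≤ β * z ^ (-α) := by
  have hbern := rpow_one_add_le_one_add_mul_self (by linarith : -1 ≤ z) hβ0 hβ1
  have hsplit : z ^ (1 + α) = z * z ^ α := by rw [Real.rpow_add hz, Real.rpow_one]
  rw [integrand_of_pos hz, Real.rpow_neg hz.le, div_le_iff₀ (by positivity), hsplit]
  field_simp
  linarith

lemma norm_integrand_le (hβ0 : 0 ≤ β) (hβ1 : β ≤ 1) {z : ℝ} (hz : 0 < z) :
    ‖integrand α β z‖ ≤ β * z ^ (-α) := by
  rw [Real.norm_of_nonneg (integrand_nonneg hβ0 hz)]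
  exact integrand_le hβ0 hβ1 hz

lemma integrableOn_integrand_Ioi (hβ0 : 0 ≤ β) (hβ1 : β ≤ 1) (hα1 : 1 < α) {b : ℝ}
    (hb : 0 < b) : IntegrableOn (integrand α β) (Ioi b) := by
  refine ((integrableOn_Ioi_rpow_of_lt (a := -α) (by linarith) hb).const_mul β).mono'
    measurable_integrand.aestronglyMeasurable ?_
  filter_upwards [ae_restrict_mem measurableSet_Ioi] with z hz
  exact norm_integrand_le hβ0 hβ1 (hb.trans hz)

lemma norm_integrand_le_of_mem_Ioo (hβ0 : 0 ≤ β) (hα : -1 ≤ α) {b z : ℝ} (hb : 0 < b)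
    (hz : z ∈ Ioo (-1) (-b)) : ‖integrand α β z‖ ≤ (b ^ (1 + α))⁻¹ := by
  obtain ⟨hz1, hzb⟩ := hz
  have h1z : 0 < 1 + z := by linarith
  have hnum : |(1 + z) ^ β - 1| ≤ 1 := by
    have := Real.rpow_le_one h1z.le (by linarith) hβ0
    rw [abs_le]; constructor <;> linarith [Real.rpow_nonneg h1z.le β]
  have hden : b ^ (1 + α) ≤ |z| ^ (1 + α) :=
    Real.rpow_le_rpow hb.le (by rw [abs_of_neg (by linarith)]; linarith) (by linarith)
  rw [integrand, Real.norm_eq_abs, abs_div, abs_of_pos h1z,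
    abs_of_nonneg (Real.rpow_nonneg (abs_nonneg z) _), ← one_div]
  exact div_le_div₀ zero_le_one hnum (by positivity) hden

lemma integrableOn_integrand_Ioo (hβ0 : 0 ≤ β) (hα : -1 ≤ α) {b : ℝ} (hb : 0 < b) :
    IntegrableOn (integrand α β) (Ioo (-1) (-b)) := by
  refine (integrableOn_const (C := (b ^ (1 + α))⁻¹) (by simp)).mono'
    measurable_integrand.aestronglyMeasurable ?_
  filter_upwards [ae_restrict_mem measurableSet_Ioo] with z hz
  exact norm_integrand_le_of_mem_Ioo hβ0 hα hb hz

lemma integrand_add_integrand_neg_div_one_add {w : ℝ} (hw : 0 < w) :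
    integrand α β w + ((1 + w) ^ 2)⁻¹ * integrand α β (-w / (1 + w)) =
      foldedIntegrand α β w := by
  have h1w : 0 < 1 + w := by linarith
  have hbase : |1 + -w / (1 + w)| = (1 + w)⁻¹ := by
    rw [show 1 + -w / (1 + w) = (1 + w)⁻¹ by field_simp; ring, abs_of_pos (by positivity)]
  have habs : |-w / (1 + w)| = w / (1 + w) := by
    rw [abs_div, abs_neg, abs_of_pos hw, abs_of_pos h1w]
  have hpow : (1 + w) ^ (1 + α) = (1 + w) ^ β * (1 + w) ^ (α - 1 - β) * (1 + w) ^ 2 := by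
    rw [← Real.rpow_two, ← Real.rpow_add h1w, ← Real.rpow_add h1w]
    ring_nf
  have := Real.rpow_pos_of_pos h1w β
  have := Real.rpow_pos_of_pos h1w (α - 1 - β)
  have := Real.rpow_pos_of_pos hw (1 + α)
  rw [integrand_of_pos hw, integrand, hbase, habs, Real.inv_rpow h1w.le,
    Real.div_rpow hw.le h1w.le, foldedIntegrand, hpow]
  field_simp
  ring

lemma abs_foldedIntegrand_le (hβ0 : 0 ≤ β) (hβ1 : β ≤ 1) (hq : |α - 1 - β| ≤ 1) {w : ℝ}
    (hw : 0 < w) : |foldedIntegrand α β w| ≤ β * |α - 1 - β| * w ^ (1 - α) := by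
  have h1 : |(1 + w) ^ β - 1| ≤ β * w := by
    have := abs_one_add_rpow_sub_one_le (p := β) (by rwa [abs_of_nonneg hβ0]) hw.le
    rwa [abs_of_nonneg hβ0] at this
  have h2 : |1 - (1 + w) ^ (α - 1 - β)| ≤ |α - 1 - β| * w := by
    rw [abs_sub_comm]; exact abs_one_add_rpow_sub_one_le hq hw.le
  have hsplit : w ^ (1 + α) * w ^ (1 - α) = w * w := by
    rw [← Real.rpow_add hw, show 1 + α + (1 - α) = 1 + 1 by ring, Real.rpow_add hw,
      Real.rpow_one]
  have hden : 0 < w ^ (1 + α) := Real.rpow_pos_of_pos hw _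
  rw [foldedIntegrand, abs_div, abs_of_pos hden, div_le_iff₀ hden, abs_mul]
  calc |(1 + w) ^ β - 1| * |1 - (1 + w) ^ (α - 1 - β)|
      ≤ β * w * (|α - 1 - β| * w) := mul_le_mul h1 h2 (abs_nonneg _) (by positivity)
    _ = β * |α - 1 - β| * w ^ (1 - α) * w ^ (1 + α) := by
      rw [mul_assoc _ (w ^ (1 - α)), mul_comm (w ^ (1 - α)), hsplit]; ring

lemma integrableOn_foldedIntegrand (hβ0 : 0 ≤ β) (hβ1 : β ≤ 1) (hα1 : 1 < α) (hα2 : α < 2) :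
    IntegrableOn (foldedIntegrand α β) (Ioi 0) := by
  rw [← Ioc_union_Ioi_eq_Ioi zero_le_one]
  refine IntegrableOn.union ?_ ?_
  · have hpow : IntegrableOn (fun w : ℝ => w ^ (1 - α)) (Ioc 0 1) := by
      rw [integrableOn_Ioc_iff_integrableOn_Ioo]
      exact (intervalIntegral.integrableOn_Ioo_rpow_iff zero_lt_one).2 (by linarith)
    refine (hpow.const_mul (β * |α - 1 - β|)).mono'
      measurable_foldedIntegrand.aestronglyMeasurable ?_
    filter_upwards [ae_restrict_mem measurableSet_Ioc] with w hw
    exact abs_foldedIntegrand_le hβ0 hβ1 (abs_le.2 ⟨by linarith, by linarith⟩) hw.1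
  · -- on `(1, ∞)` the folded integrand is the integrand plus its pullback from `(-1, -1/2)`
    have hfold := (integrableOn_Ioo_iff_neg_div_one_add (b := 1 / 2) (by norm_num) (by norm_num)
      (integrand α β)).1 (integrableOn_integrand_Ioo hβ0 (by linarith) (by norm_num))
    rw [show (1 / 2 : ℝ) / (1 - 1 / 2) = 1 by norm_num] at hfold
    refine ((integrableOn_integrand_Ioi hβ0 hβ1 hα1 one_pos).add hfold).congr_fun
      (fun w hw => ?_) measurableSet_Ioi
    exact integrand_add_integrand_neg_div_one_add (zero_lt_one.trans hw)

lemma foldedIntegrand_pos (hβ0 : 0 < β) (hαβ : α - 1 < β) {w : ℝ} (hw : 0 < w) :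
    0 < foldedIntegrand α β w := by
  have h1w : 1 < 1 + w := by linarith
  have h1 : 1 < (1 + w) ^ β := Real.one_lt_rpow h1w hβ0
  have h2 : (1 + w) ^ (α - 1 - β) < 1 := Real.rpow_lt_one_of_one_lt_of_neg h1w (by linarith)
  exact div_pos (mul_pos (by linarith) (by linarith)) (Real.rpow_pos_of_pos hw _)

lemma foldedIntegrand_neg (hβ0 : 0 < β) (hαβ : β < α - 1) {w : ℝ} (hw : 0 < w) :
    foldedIntegrand α β w < 0 := by
  have h1w : 1 < 1 + w := by linarith
  have h1 : 1 < (1 + w) ^ β := Real.one_lt_rpow h1w hβ0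
  have h2 : 1 < (1 + w) ^ (α - 1 - β) := Real.one_lt_rpow h1w (by linarith)
  exact div_neg_of_neg_of_pos (mul_neg_of_pos_of_neg (by linarith) (by linarith))
    (Real.rpow_pos_of_pos hw _)

lemma setOf_neg_one_lt_and_lt_abs {b : ℝ} (hb : 0 < b) :
    {z : ℝ | -1 < z ∧ b < |z|} = Ioo (-1) (-b) ∪ Ioi b := by
  ext z
  simp only [mem_ofPred_eq, mem_union, mem_Ioo, mem_Ioi, lt_abs]
  constructor
  · rintro ⟨h1, hz | hz⟩
    · exact .inr hz
    · exact .inl ⟨h1, by linarith⟩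
  · rintro (⟨h1, hz⟩ | hz)
    · exact ⟨h1, .inr (by linarith)⟩
    · exact ⟨by linarith, .inl hz⟩

lemma setIntegral_integrand_eq (hβ0 : 0 ≤ β) (hβ1 : β ≤ 1) (hα1 : 1 < α) (hα2 : α < 2)
    {b : ℝ} (hb0 : 0 < b) (hb1 : b < 1) :
    ∫ z in {z : ℝ | -1 < z ∧ b < |z|}, integrand α β z =
      (∫ w in Ioi 0, foldedIntegrand α β w) - (∫ w in Ioc 0 (b / (1 - b)), foldedIntegrand α β w)
        + ∫ z in Ioc b (b / (1 - b)), integrand α β z := by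
  set c := b / (1 - b)
  have hc0 : 0 < c := div_pos hb0 (by linarith)
  have hbc : b ≤ c := by rw [le_div_iff₀ (by linarith)]; nlinarith
  have hF := integrableOn_foldedIntegrand hβ0 hβ1 hα1 hα2
  have hf (a : ℝ) (ha : 0 < a) := integrableOn_integrand_Ioi (α := α) hβ0 hβ1 hα1 ha
  have hpullback : ∫ w in Ioi c, ((1 + w) ^ 2)⁻¹ • integrand α β (-w / (1 + w)) =
      (∫ w in Ioi c, foldedIntegrand α β w) - ∫ w in Ioi c, integrand α β w := by
    rw [← integral_sub (hF.mono_set (Ioi_subset_Ioi hc0.le)) (hf c hc0)]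
    refine setIntegral_congr_fun measurableSet_Ioi fun w hw => ?_
    rw [smul_eq_mul, ← integrand_add_integrand_neg_div_one_add (hc0.trans hw)]
    ring
  have hdisj : Disjoint (Ioo (-1) (-b)) (Ioi b) :=
    (Iic_disjoint_Ioi (by linarith)).mono_left (Ioo_subset_Iio_self.trans Iio_subset_Iic_self)
  rw [setOf_neg_one_lt_and_lt_abs hb0, setIntegral_union hdisj measurableSet_Ioi
      (integrableOn_integrand_Ioo hβ0 (by linarith) hb0) (hf b hb0),
    setIntegral_Ioo_eq_neg_div_one_add hb0 hb1, hpullback,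
    setIntegral_Ioi_eq_setIntegral_Ioc_add hbc (hf b hb0),
    setIntegral_Ioi_eq_setIntegral_Ioc_add hc0.le hF]
  ring

lemma norm_setIntegral_integrand_Ioc_le (hβ0 : 0 ≤ β) (hβ1 : β ≤ 1) (hα : 0 ≤ α) {b : ℝ}
    (hb0 : 0 < b) (hb1 : b < 1) :
    ‖∫ z in Ioc b (b / (1 - b)), integrand α β z‖ ≤ β * b ^ (2 - α) / (1 - b) := by
  have h1b : 0 < 1 - b := by linarith
  have hbound : ∀ z ∈ Ioc b (b / (1 - b)), ‖integrand α β z‖ ≤ β * b ^ (-α) := fun z hz =>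
    (norm_integrand_le hβ0 hβ1 (hb0.trans hz.1)).trans <| mul_le_mul_of_nonneg_left
      (Real.rpow_le_rpow_of_nonpos hb0 hz.1.le (by linarith)) hβ0
  refine (norm_setIntegral_le_of_norm_le_const measure_Ioc_lt_top hbound).trans_eq ?_
  rw [Real.volume_real_Ioc_of_le (by rw [le_div_iff₀ h1b]; nlinarith),
    show 2 - α = -α + 2 by ring, Real.rpow_add hb0, Real.rpow_two]
  field_simp
  ring

lemma tendsto_setIntegral_integrand (hβ0 : 0 ≤ β) (hβ1 : β ≤ 1) (hα1 : 1 < α) (hα2 : α < 2) :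
    Tendsto (fun b => ∫ z in {z : ℝ | -1 < z ∧ b < |z|}, integrand α β z) (𝓝[>] 0)
      (𝓝 (∫ w in Ioi 0, foldedIntegrand α β w)) := by
  have hc : Tendsto (fun b : ℝ => b / (1 - b)) (𝓝[>] 0) (𝓝 0) := by
    have : ContinuousAt (fun b : ℝ => b / (1 - b)) 0 := by fun_prop (disch := norm_num)
    simpa using this.tendsto.mono_left nhdsWithin_le_nhds
  have hfold := (integrableOn_foldedIntegrand hβ0 hβ1 hα1 hα2).tendsto_setIntegral_Ioc.comp hc
  have hbound : Tendsto (fun b : ℝ => β * b ^ (2 - α) / (1 - b)) (𝓝 0)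
      (𝓝 (β * 0 ^ (2 - α) / (1 - 0))) :=
    ((Real.continuousAt_rpow_const 0 (2 - α) (.inr (by linarith))).tendsto.const_mul β).div
      (tendsto_const_nhds.sub tendsto_id) (by norm_num)
  rw [Real.zero_rpow (by linarith), mul_zero, zero_div] at hbound
  have hrest : Tendsto (fun b => ∫ z in Ioc b (b / (1 - b)), integrand α β z) (𝓝[>] 0) (𝓝 0) := by
    refine squeeze_zero_norm' ?_ (hbound.mono_left nhdsWithin_le_nhds)
    filter_upwards [Ioo_mem_nhdsGT one_pos] with b hb
    exact norm_setIntegral_integrand_Ioc_le hβ0 hβ1 (by linarith) hb.1 hb.2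
  have hsum := ((tendsto_const_nhds (x := ∫ w in Ioi 0, foldedIntegrand α β w)).sub hfold).add hrest
  rw [sub_zero, add_zero] at hsum
  refine hsum.congr' ?_
  filter_upwards [Ioo_mem_nhdsGT one_pos] with b hb
  exact (setIntegral_integrand_eq hβ0 hβ1 hα1 hα2 hb.1 hb.2).symm

end RpowSubOnePV

open RpowSubOnePV

/-- For `α ∈ (1,2)`: if `β ∈ (α-1, 1)` the principal value integral
`P.V. ∫_{z ≥ -1} (|1+z|^β - 1)/|z|^{1+α} dz` is strictly positive, and if
`β ∈ (0, α-1)` it is strictly negative. -/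
theorem pv_integral_rpow_sub_one_sign (α β : ℝ) (hα1 : 1 < α) (hα2 : α < 2)
    (hβ0 : 0 < β) (hβ1 : β < 1) :
    (α - 1 < β → ∃ L : ℝ, 0 < L ∧
      Tendsto (fun b : ℝ =>
          ∫ z in {z : ℝ | -1 < z ∧ b < |z|}, (|1 + z| ^ β - 1) / |z| ^ (1 + α))
        (𝓝[>] (0 : ℝ)) (𝓝 L)) ∧
    (β < α - 1 → ∃ L : ℝ, L < 0 ∧
      Tendsto (fun b : ℝ =>
          ∫ z in {z : ℝ | -1 < z ∧ b < |z|}, (|1 + z| ^ β - 1) / |z| ^ (1 + α))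
        (𝓝[>] (0 : ℝ)) (𝓝 L)) := by
  have hlim := tendsto_setIntegral_integrand hβ0.le hβ1.le hα1 hα2
  have hF := integrableOn_foldedIntegrand hβ0.le hβ1.le hα1 hα2
  refine ⟨fun hαβ => ⟨_, ?_, hlim⟩, fun hαβ => ⟨_, ?_, hlim⟩⟩
  · exact setIntegral_pos_of_forall_pos measurableSet_Ioi (by simp) hF
      fun w hw => foldedIntegrand_pos hβ0 hαβ hw
  · have := setIntegral_pos_of_forall_pos (f := fun w => -foldedIntegrand α β w)
      measurableSet_Ioi (by simp) hF.neg
      fun w hw => neg_pos.2 (foldedIntegrand_neg hβ0 hαβ hw)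
    rwa [integral_neg, neg_pos] at this
end

section
/- For α ∈ (0,1), the principal value integral ∫_{z ≥ -1} ln(1+z)/|z|^{1+α} dz is strictly positive. -/
/-!
On `(0, ∞)` the bound `log (1 + z) ≤ z ^ s / s` (`0 < s ≤ 1`) makes the integrand `O(z ^ (-α))`
at `0` (take `s = 1`) and `O(z ^ (-1 - α / 2))` at `∞` (take `s = α / 2`). The substitution
`1 + z ↦ (1 + z)⁻¹` carries `(0, ∞)` onto `(-1, 0)` and turns the integrand there into
`-(1 + z) ^ (α - 1) log (1 + z) / z ^ (1 + α)`, which is dominated by the integrand on `(0, ∞)`.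
So the integrand is absolutely integrable on `(-1, ∞)`, the principal value is the Lebesgue
integral by dominated convergence, and it equals
`∫₀^∞ (1 - (1 + z) ^ (α - 1)) log (1 + z) / z ^ (1 + α) dz > 0` since `α < 1`.
-/

open MeasureTheory Filter Topology Set

theorem Real.log_one_add_le_rpow_div {x s : ℝ} (hx : 0 ≤ x) (hs : 0 < s) (hs1 : s ≤ 1) :
    Real.log (1 + x) ≤ x ^ s / s := by
  have h1x : 0 < 1 + x := by linarith
  rw [le_div_iff₀ hs, mul_comm, ← Real.log_rpow h1x]
  calc Real.log ((1 + x) ^ s) ≤ (1 + x) ^ s - 1 := Real.log_le_sub_one_of_pos (by positivity)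
    _ ≤ x ^ s := by
      have := Real.rpow_add_le_add_rpow zero_le_one hx hs.le hs1
      rw [Real.one_rpow] at this; linarith

theorem tendsto_setIntegral_lt_abs_nhdsGT_zero {E : Type*} [NormedAddCommGroup E]
    [NormedSpace ℝ E] {μ : Measure ℝ} [NullSingletonClass μ] {f : ℝ → E} (hf : Integrable f μ) :
    Tendsto (fun b : ℝ => ∫ z in {z | b < |z|}, f z ∂μ) (𝓝[>] 0) (𝓝 (∫ z, f z ∂μ)) := by
  have hmeas (b : ℝ) : MeasurableSet {z : ℝ | b < |z|} :=
    measurableSet_lt measurable_const measurable_abs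
  simp_rw [← integral_indicator (hmeas _)]
  refine tendsto_integral_filter_of_dominated_convergence (fun z => ‖f z‖)
    (Eventually.of_forall fun b => hf.aestronglyMeasurable.indicator (hmeas b))
    (Eventually.of_forall fun b => ae_of_all _ fun z => norm_indicator_le_norm_self _ _)
    hf.norm ?_
  filter_upwards [compl_mem_ae_iff.mpr (measure_singleton (μ := μ) 0)] with z hz
  refine tendsto_const_nhds.congr' ?_
  filter_upwards [Ioo_mem_nhdsGT (abs_pos.mpr hz)] with b hb
  exact (indicator_of_mem (s := {z | b < |z|}) hb.2 f).symm

-- `y ↦ -y` in the variable `y = log (1 + z)`.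
noncomputable def reflect (z : ℝ) : ℝ := (1 + z)⁻¹ - 1

theorem one_add_reflect (z : ℝ) : 1 + reflect z = (1 + z)⁻¹ := add_sub_cancel _ _

theorem reflect_involutive : Function.Involutive reflect := fun z => by
  rw [reflect, one_add_reflect, inv_inv, add_sub_cancel_left]

theorem reflect_image_Ioi_zero : reflect '' Ioi 0 = Ioo (-1) 0 := by
  ext y
  rw [reflect_involutive.image_eq_preimage_symm, mem_preimage, mem_Ioi, reflect, sub_pos,
    one_lt_inv_iff₀, mem_Ioo]
  constructor <;> intro h <;> constructor <;> linarith [h.1, h.2]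

theorem hasDerivAt_reflect {z : ℝ} (hz : 1 + z ≠ 0) :
    HasDerivAt reflect (-1 / (1 + z) ^ 2) z :=
  (((hasDerivAt_id z).const_add 1).inv hz).sub_const 1

theorem hasDerivWithinAt_reflect_Ioi_zero :
    ∀ z ∈ Ioi (0 : ℝ), HasDerivWithinAt reflect (-1 / (1 + z) ^ 2) (Ioi 0) z :=
  fun z hz => (hasDerivAt_reflect (by linarith [mem_Ioi.mp hz])).hasDerivWithinAt

noncomputable def logKernel (α z : ℝ) : ℝ := Real.log (1 + z) / |z| ^ (1 + α)

namespace logKernel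

variable {α : ℝ}

@[fun_prop]
theorem measurable : Measurable (logKernel α) := by
  unfold logKernel; fun_prop

theorem pos {z : ℝ} (hz : 0 < z) : 0 < logKernel α z :=
  div_pos (Real.log_pos (by linarith)) (by positivity)

theorem le_rpow {z s : ℝ} (hz : 0 < z) (hs : 0 < s) (hs1 : s ≤ 1) :
    logKernel α z ≤ z ^ (s - (1 + α)) / s := by
  rw [logKernel, abs_of_pos hz, Real.rpow_sub hz, div_right_comm]
  exact div_le_div_of_nonneg_right (Real.log_one_add_le_rpow_div hz.le hs hs1) (by positivity)

theorem integrableOn_Ioi_zero (hα : 0 < α) (hα1 : α < 1) :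
    IntegrableOn (logKernel α) (Ioi 0) := by
  have h0 : IntegrableOn (fun z : ℝ => z ^ (1 - (1 + α)) / 1) (Ioc 0 1) := by
    simpa [intervalIntegrable_iff_integrableOn_Ioc_of_le zero_le_one] using
      intervalIntegral.intervalIntegrable_rpow' (a := 0) (b := 1) (r := 1 - (1 + α)) (by linarith)
  have h1 : IntegrableOn (fun z : ℝ => z ^ (α / 2 - (1 + α)) / (α / 2)) (Ioi 1) :=
    ((integrableOn_Ioi_rpow_iff zero_lt_one).mpr (by linarith)).div_const _
  rw [← Ioc_union_Ioi_eq_Ioi zero_le_one]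
  refine IntegrableOn.union (h0.mono' measurable.aestronglyMeasurable ?_)
    (h1.mono' measurable.aestronglyMeasurable ?_)
  · filter_upwards [ae_restrict_mem measurableSet_Ioc] with z hz
    rw [Real.norm_of_nonneg (pos hz.1).le]
    exact le_rpow hz.1 one_pos le_rfl
  · filter_upwards [ae_restrict_mem measurableSet_Ioi] with z hz
    have hz0 : (0 : ℝ) < z := zero_lt_one.trans hz
    rw [Real.norm_of_nonneg (pos hz0).le]
    exact le_rpow hz0 (by linarith) (by linarith)

theorem abs_deriv_reflect_mul_reflect {z : ℝ} (hz : 0 < z) :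
    |-1 / (1 + z) ^ 2| * logKernel α (reflect z) = -((1 + z) ^ (α - 1) * logKernel α z) := by
  have h1z : 0 < 1 + z := by linarith
  have habs : |reflect z| = z * (1 + z)⁻¹ := by
    rw [reflect, abs_of_nonpos]
    · field_simp; ring
    · rw [sub_nonpos]; exact inv_le_one_of_one_le₀ (by linarith)
  rw [logKernel, logKernel, one_add_reflect, Real.log_inv, habs, abs_of_pos hz,
    Real.mul_rpow hz.le (by positivity), Real.inv_rpow h1z.le, abs_div, abs_neg, abs_one,
    abs_of_pos (by positivity), Real.rpow_sub_one h1z.ne']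
  have : (1 + z) ^ (1 + α) = (1 + z) ^ α * (1 + z) := by
    rw [Real.rpow_add h1z, Real.rpow_one, mul_comm]
  rw [this]
  field_simp

theorem integrableOn_rpow_mul_Ioi_zero (hα : 0 < α) (hα1 : α < 1) :
    IntegrableOn (fun z => (1 + z) ^ (α - 1) * logKernel α z) (Ioi 0) := by
  refine Integrable.mono (integrableOn_Ioi_zero hα hα1) (by fun_prop) ?_
  filter_upwards [ae_restrict_mem measurableSet_Ioi] with z hz
  have h1z : (1 : ℝ) ≤ 1 + z := by linarith [mem_Ioi.mp hz]
  rw [norm_mul, Real.norm_of_nonneg (by positivity)]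
  exact mul_le_of_le_one_left (norm_nonneg _)
    (Real.rpow_le_one_of_one_le_of_nonpos h1z (by linarith))

theorem integrableOn_Ioo_neg_one_zero (hα : 0 < α) (hα1 : α < 1) :
    IntegrableOn (logKernel α) (Ioo (-1) 0) := by
  rw [← reflect_image_Ioi_zero, integrableOn_image_iff_integrableOn_abs_deriv_smul
    measurableSet_Ioi hasDerivWithinAt_reflect_Ioi_zero reflect_involutive.injective.injOn]
  exact (integrableOn_rpow_mul_Ioi_zero hα hα1).neg.congr_fun
    (fun z hz => (abs_deriv_reflect_mul_reflect hz).symm) measurableSet_Ioi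

theorem setIntegral_Ioo_neg_one_zero :
    ∫ z in Ioo (-1) 0, logKernel α z = -∫ z in Ioi 0, (1 + z) ^ (α - 1) * logKernel α z := by
  rw [← reflect_image_Ioi_zero, integral_image_eq_integral_abs_deriv_smul
    measurableSet_Ioi hasDerivWithinAt_reflect_Ioi_zero reflect_involutive.injective.injOn,
    ← integral_neg]
  exact setIntegral_congr_fun measurableSet_Ioi fun z hz =>
    abs_deriv_reflect_mul_reflect hz

theorem integrableOn_Ioi_neg_one (hα : 0 < α) (hα1 : α < 1) :
    IntegrableOn (logKernel α) (Ioi (-1)) := by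
  rw [← Ioc_union_Ioi_eq_Ioi (by norm_num : (-1 : ℝ) ≤ 0)]
  exact ((integrableOn_Ioc_iff_integrableOn_Ioo).mpr (integrableOn_Ioo_neg_one_zero hα hα1)).union
    (integrableOn_Ioi_zero hα hα1)

theorem setIntegral_Ioi_neg_one (hα : 0 < α) (hα1 : α < 1) :
    ∫ z in Ioi (-1), logKernel α z = ∫ z in Ioi 0, (1 - (1 + z) ^ (α - 1)) * logKernel α z := by
  have hK := integrableOn_Ioi_neg_one hα hα1
  rw [← Ioc_union_Ioi_eq_Ioi (by norm_num : (-1 : ℝ) ≤ 0),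
    setIntegral_union (Ioc_disjoint_Ioi le_rfl) measurableSet_Ioi
      (hK.mono_set Ioc_subset_Ioi_self) (hK.mono_set (Ioi_subset_Ioi (by norm_num))),
    integral_Ioc_eq_integral_Ioo, setIntegral_Ioo_neg_one_zero, neg_add_eq_sub,
    ← integral_sub (integrableOn_Ioi_zero hα hα1) (integrableOn_rpow_mul_Ioi_zero hα hα1)]
  simp_rw [sub_mul, one_mul]

theorem setIntegral_Ioi_neg_one_pos (hα : 0 < α) (hα1 : α < 1) :
    0 < ∫ z in Ioi (-1), logKernel α z := by
  have hpos : ∀ z ∈ Ioi (0 : ℝ), 0 < (1 - (1 + z) ^ (α - 1)) * logKernel α z := fun z hz =>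
    mul_pos (sub_pos.mpr (Real.rpow_lt_one_of_one_lt_of_neg (by linarith [mem_Ioi.mp hz])
      (by linarith))) (pos hz)
  rw [setIntegral_Ioi_neg_one hα hα1, setIntegral_pos_iff_support_of_nonneg_ae
    ((ae_restrict_mem measurableSet_Ioi).mono fun z hz => (hpos z hz).le)]
  · rw [inter_eq_right.mpr fun z hz => Function.mem_support.mpr (hpos z hz).ne', Real.volume_Ioi]
    exact ENNReal.zero_lt_top
  · exact ((integrableOn_Ioi_zero hα hα1).sub (integrableOn_rpow_mul_Ioi_zero hα hα1)).congr_fun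
      (fun z _ => by simp only [Pi.sub_apply]; ring) measurableSet_Ioi

end logKernel

/-- For `α ∈ (0,1)`, the principal value integral
`P.V. ∫_{z ≥ -1} ln(1+z)/|z|^{1+α} dz` is strictly positive. -/
theorem pv_integral_log_pos (α : ℝ) (hα1 : 0 < α) (hα2 : α < 1) :
    ∃ L : ℝ, 0 < L ∧
      Tendsto (fun b : ℝ =>
          ∫ z in {z : ℝ | -1 < z ∧ b < |z|}, Real.log (1 + z) / |z| ^ (1 + α))
        (𝓝[>] (0 : ℝ)) (𝓝 L) := by
  refine ⟨_, logKernel.setIntegral_Ioi_neg_one_pos hα1 hα2,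
    (tendsto_setIntegral_lt_abs_nhdsGT_zero (logKernel.integrableOn_Ioi_neg_one hα1 hα2)).congr
      fun b => ?_⟩
  rw [Measure.restrict_restrict (measurableSet_lt measurable_const measurable_abs)]
  congr 2 with z
  exact and_comm
end

section
/- Let α ∈ (1,2), β = α - 1. Define B(a) = ∫_{-a-1}^{-a} (|1+z|^β - 1)/|z|^{1+α} dz for a > 1, and G = P.V. ∫_{-1}^{1} (|1+z|^β + |1-z|^β - 2)/|z|^{1+α} dz. Then B(2) < -G/2. -/
/-!
Both integrals have elementary primitives. On `(0, 1]` the `G`-integrand is the derivative of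
`-z^(-α) ((1 + z)^α + (1 - z)^α - 2) / α`, and it is even, so the truncated integrals equal
`2 (b^(-α) ((1 + b)^α + (1 - b)^α - 2) - (2^α - 2)) / α`; the boundary term is
`O(b^(2 - α))` by Bernoulli's inequality, whence `G = -2 (2^α - 2) / α`. Likewise
`B(2) = ((2^α + 1) 3^(-α) - 2 · 2^(-α)) / α`. With `u = 2^α ≥ 2` and `3^α > 3`, the claim
`B(2) < (2^α - 2) / α` reduces to `(2u - 3)(u - 2) ≥ 0`.
-/

open MeasureTheory Filter Topology Set

theorem hasDerivAt_rpow_mul_rpow_neg {a s p x : ℝ} (hx : x ≠ 0) (h : a + s * x ≠ 0 ∨ 1 ≤ p) :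
    HasDerivAt (fun y => (a + s * y) ^ p * y ^ (-p))
      (-(p * a) * ((a + s * x) ^ (p - 1) * x ^ (-p - 1))) x := by
  have hlin : HasDerivAt (fun y => a + s * y) s x := by
    simpa using ((hasDerivAt_id x).const_mul s).const_add a
  refine ((hlin.rpow_const h).mul (Real.hasDerivAt_rpow_const (Or.inl hx))).congr_deriv ?_
  have hx' : x ^ (-p) = x ^ (-p - 1) * x := by rw [← Real.rpow_add_one hx]; ring_nf
  have hax : (a + s * x) ^ p = (a + s * x) ^ (p - 1) * (a + s * x) := by
    rcases eq_or_ne (a + s * x) 0 with h0 | h0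
    · have hp : p ≠ 0 := by have := h.resolve_left (not_not.2 h0); positivity
      rw [h0, Real.zero_rpow hp, mul_zero]
    · rw [← Real.rpow_add_one h0]; ring_nf
  rw [hx', hax]
  ring

theorem div_rpow_one_add_eq_mul_rpow {x : ℝ} (hx : 0 ≤ x) (c p : ℝ) :
    c / x ^ (1 + p) = c * x ^ (-p - 1) := by
  rw [show -p - 1 = -(1 + p) by ring, Real.rpow_neg hx, div_eq_mul_inv]

theorem continuousOn_div_abs_rpow {f : ℝ → ℝ} (hf : Continuous f) (q : ℝ) {s : Set ℝ}
    (hs : ∀ x ∈ s, x ≠ 0) : ContinuousOn (fun z => f z / |z| ^ q) s :=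
  hf.continuousOn.div
    (continuous_abs.continuousOn.rpow_const fun x hx => Or.inl (by simpa using hs x hx))
    fun x hx => (Real.rpow_pos_of_pos (abs_pos.2 (hs x hx)) q).ne'

theorem setIntegral_abs_preimage_eq_two_mul {f : ℝ → ℝ} (hf : Function.Even f) {s : Set ℝ}
    (hs : MeasurableSet s) (hs0 : s ⊆ Ioi 0) : ∫ x in abs ⁻¹' s, f x = 2 * ∫ x in s, f x := by
  have hind : (abs ⁻¹' s).indicator f = fun x => s.indicator f |x| := by
    ext x
    have hfx : f |x| = f x := by rcases abs_choice x with h | h <;> simp [h, hf x]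
    by_cases hx : |x| ∈ s
    · rw [indicator_of_mem hx, indicator_of_mem (show x ∈ abs ⁻¹' s from hx), hfx]
    · rw [indicator_of_notMem hx, indicator_of_notMem (show x ∉ abs ⁻¹' s from hx)]
  calc ∫ x in abs ⁻¹' s, f x = ∫ x, s.indicator f |x| := by
        rw [← integral_indicator (hs.preimage measurable_abs), hind]
    _ = 2 * ∫ x in Ioi 0, s.indicator f x := integral_comp_abs
    _ = 2 * ∫ x in s, f x := by rw [setIntegral_indicator hs, inter_eq_right.2 hs0]

theorem two_le_rpow_one_add_add_rpow_one_sub {p b : ℝ} (hp : 1 ≤ p) (hb0 : -1 ≤ b)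
    (hb1 : b ≤ 1) : 2 ≤ (1 + b) ^ p + (1 - b) ^ p := by
  have hplus := one_add_mul_self_le_rpow_one_add hb0 hp
  have hminus := one_add_mul_self_le_rpow_one_add (s := -b) (by linarith) hp
  rw [← sub_eq_add_neg] at hminus
  linarith

theorem rpow_one_add_add_rpow_one_sub_le {p b : ℝ} (hp1 : 1 ≤ p) (hp2 : p ≤ 2) (hb0 : -1 ≤ b)
    (hb1 : b ≤ 1) : (1 + b) ^ p + (1 - b) ^ p ≤ 2 + 2 * (p - 1) * b ^ 2 := by
  have hpow {x : ℝ} (hx : 0 ≤ x) : x ^ p = x ^ (p - 1) * x := by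
    rw [← Real.rpow_add_one' hx (by linarith), sub_add_cancel]
  have hplus := rpow_one_add_le_one_add_mul_self hb0 (p := p - 1) (by linarith) (by linarith)
  have hminus := rpow_one_add_le_one_add_mul_self (s := -b) (by linarith) (p := p - 1)
    (by linarith) (by linarith)
  rw [← sub_eq_add_neg] at hminus
  rw [hpow (by linarith : 0 ≤ 1 + b), hpow (by linarith : 0 ≤ 1 - b)]
  nlinarith [mul_le_mul_of_nonneg_right hplus (by linarith : 0 ≤ 1 + b),
    mul_le_mul_of_nonneg_right hminus (by linarith : 0 ≤ 1 - b)]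

theorem tendsto_rpow_neg_mul_rpow_one_add_add_rpow_one_sub {p : ℝ} (hp1 : 1 ≤ p)
    (hp2 : p < 2) :
    Tendsto (fun b : ℝ => b ^ (-p) * ((1 + b) ^ p + (1 - b) ^ p - 2)) (𝓝[>] 0) (𝓝 0) := by
  have hsmall : Ioo (0 : ℝ) 1 ∈ 𝓝[>] 0 := Ioo_mem_nhdsGT one_pos
  have hbound : Tendsto (fun b : ℝ => 2 * (p - 1) * b ^ (2 - p)) (𝓝[>] 0) (𝓝 0) := by
    have := ((Real.continuousAt_rpow_const 0 (2 - p) (Or.inr (by linarith))).tendsto.mono_left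
      (nhdsWithin_le_nhds (s := Ioi 0))).const_mul (2 * (p - 1))
    rwa [Real.zero_rpow (by linarith), mul_zero] at this
  refine squeeze_zero' ?_ ?_ hbound
  · filter_upwards [hsmall] with b hb
    have := two_le_rpow_one_add_add_rpow_one_sub hp1 (b := b) (by linarith [hb.1]) hb.2.le
    exact mul_nonneg (Real.rpow_nonneg hb.1.le _) (by linarith)
  · filter_upwards [hsmall] with b hb
    calc b ^ (-p) * ((1 + b) ^ p + (1 - b) ^ p - 2) ≤ b ^ (-p) * (2 * (p - 1) * b ^ 2) := by
          have :=
            rpow_one_add_add_rpow_one_sub_le hp1 hp2.le (b := b) (by linarith [hb.1]) hb.2.le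
          have := Real.rpow_nonneg hb.1.le (-p)
          gcongr
          linarith
      _ = 2 * (p - 1) * b ^ (2 - p) := by
          rw [show (2 : ℝ) - p = -p + 2 by ring, Real.rpow_add hb.1, Real.rpow_two]; ring

theorem hasDerivAt_G_primitive {α z : ℝ} (hα : 1 ≤ α) (hz0 : 0 < z) (hz1 : z ≤ 1) :
    HasDerivAt (fun y => -((1 + y) ^ α * y ^ (-α) + (1 - y) ^ α * y ^ (-α) - 2 * y ^ (-α)) / α)
      ((|1 + z| ^ (α - 1) + |1 - z| ^ (α - 1) - 2) / |z| ^ (1 + α)) z := by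
  have hplus := hasDerivAt_rpow_mul_rpow_neg (a := 1) (s := 1) hz0.ne' (Or.inr hα)
  have hminus := hasDerivAt_rpow_mul_rpow_neg (a := 1) (s := -1) hz0.ne' (Or.inr hα)
  simp only [one_mul, neg_one_mul, ← sub_eq_add_neg] at hplus hminus
  have hneg := (Real.hasDerivAt_rpow_const (p := -α) (Or.inl hz0.ne')).const_mul 2
  refine (((hplus.add hminus).sub hneg).neg.div_const α).congr_deriv ?_
  rw [abs_of_pos (by linarith : 0 < 1 + z), abs_of_nonneg (by linarith : 0 ≤ 1 - z),
    abs_of_pos hz0, div_rpow_one_add_eq_mul_rpow hz0.le]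
  field_simp
  ring

theorem intervalIntegral_G_integrand_eq {α b : ℝ} (hα : 1 ≤ α) (hb0 : 0 < b) (hb1 : b ≤ 1) :
    ∫ z in b..1, (|1 + z| ^ (α - 1) + |1 - z| ^ (α - 1) - 2) / |z| ^ (1 + α) =
      (b ^ (-α) * ((1 + b) ^ α + (1 - b) ^ α - 2) - (2 ^ α - 2)) / α := by
  have hcont : Continuous fun z : ℝ => |1 + z| ^ (α - 1) + |1 - z| ^ (α - 1) - 2 := by
    fun_prop (disch := simp [hα])
  have hmem : ∀ z ∈ uIcc b 1, 0 < z ∧ z ≤ 1 := fun z hz => by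
    rw [uIcc_of_le hb1] at hz; exact ⟨hb0.trans_le hz.1, hz.2⟩
  rw [intervalIntegral.integral_eq_sub_of_hasDerivAt
    (fun z hz => hasDerivAt_G_primitive hα (hmem z hz).1 (hmem z hz).2)
    ((continuousOn_div_abs_rpow hcont _ fun z hz => (hmem z hz).1.ne').intervalIntegrable)]
  norm_num [Real.zero_rpow (zero_lt_one.trans_le hα).ne']
  ring

theorem hasDerivAt_B_primitive {α w : ℝ} (hα : 1 ≤ α) (hw : 1 ≤ w) :
    HasDerivAt (fun y => ((-1 + y) ^ α * y ^ (-α) + y ^ (-α)) / α)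
      ((|1 + -w| ^ (α - 1) - 1) / |-w| ^ (1 + α)) w := by
  have hw0 : 0 < w := by linarith
  have h := hasDerivAt_rpow_mul_rpow_neg (a := -1) (s := 1) hw0.ne' (Or.inr hα)
  simp only [one_mul] at h
  refine ((h.add (Real.hasDerivAt_rpow_const (Or.inl hw0.ne'))).div_const α).congr_deriv ?_
  rw [abs_neg, abs_of_pos hw0, show |1 + -w| = -1 + w by rw [abs_of_nonpos (by linarith)]; ring,
    div_rpow_one_add_eq_mul_rpow hw0.le]
  field_simp
  ring

theorem intervalIntegral_B_integrand_eq {α a : ℝ} (hα : 1 ≤ α) (ha : 1 ≤ a) :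
    ∫ z in (-a - 1)..(-a), (|1 + z| ^ (α - 1) - 1) / |z| ^ (1 + α) =
      ((a ^ α + 1) * (a + 1) ^ (-α) - ((a - 1) ^ α + 1) * a ^ (-α)) / α := by
  have hcont : Continuous fun w : ℝ => |1 + -w| ^ (α - 1) - 1 := by
    fun_prop (disch := simp [hα])
  have hint : ∀ w ∈ uIcc a (a + 1), 1 ≤ w := fun w hw => by
    rw [uIcc_of_le (by linarith)] at hw; linarith [hw.1]
  rw [show -a - 1 = -(a + 1) by ring, ← intervalIntegral.integral_comp_neg,
    intervalIntegral.integral_eq_sub_of_hasDerivAt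
      (fun w hw => hasDerivAt_B_primitive hα (hint w hw))]
  · rw [show -1 + (a + 1) = a by ring, neg_add_eq_sub]
    ring
  · simp only [abs_neg]
    exact (continuousOn_div_abs_rpow hcont _ fun w hw =>
      (zero_lt_one.trans_le (hint w hw)).ne').intervalIntegrable

theorem tendsto_G_truncation {α : ℝ} (hα1 : 1 ≤ α) (hα2 : α < 2) :
    Tendsto (fun b : ℝ => ∫ z in {z : ℝ | b < |z| ∧ |z| < 1},
        (|1 + z| ^ (α - 1) + |1 - z| ^ (α - 1) - 2) / |z| ^ (1 + α))
      (𝓝[>] 0) (𝓝 (-(2 * (2 ^ α - 2)) / α)) := by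
  have heven : Function.Even fun z : ℝ =>
      (|1 + z| ^ (α - 1) + |1 - z| ^ (α - 1) - 2) / |z| ^ (1 + α) := by
    intro z
    simp only [abs_neg, ← sub_eq_add_neg, sub_neg_eq_add]
    ring
  have hlim := (((tendsto_rpow_neg_mul_rpow_one_add_add_rpow_one_sub hα1 hα2).sub_const
    (2 ^ α - 2)).div_const α).const_mul 2
  rw [zero_sub, mul_div_assoc', mul_neg] at hlim
  refine hlim.congr' ?_
  filter_upwards [Ioo_mem_nhdsGT one_pos] with b hb
  rw [← intervalIntegral_G_integrand_eq hα1 hb.1 hb.2.le, intervalIntegral.integral_of_le hb.2.le,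
    integral_Ioc_eq_integral_Ioo,
    ← setIntegral_abs_preimage_eq_two_mul heven measurableSet_Ioo fun z hz => hb.1.trans hz.1]
  rfl

theorem two_rpow_add_one_mul_three_rpow_neg_sub_lt {α : ℝ} (hα : 1 < α) :
    (2 ^ α + 1) * 3 ^ (-α) - 2 * 2 ^ (-α) < (2 : ℝ) ^ α - 2 := by
  rw [Real.rpow_neg (by norm_num), Real.rpow_neg (by norm_num)]
  have hu : 2 ≤ (2 : ℝ) ^ α := by
    simpa using Real.rpow_le_rpow_of_exponent_le (by norm_num : (1 : ℝ) ≤ 2) hα.le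
  have hv : 3 < (3 : ℝ) ^ α := by
    simpa using Real.rpow_lt_rpow_of_exponent_lt (by norm_num : (1 : ℝ) < 3) hα
  set u := (2 : ℝ) ^ α
  have h3 : (u + 1) * ((3 : ℝ) ^ α)⁻¹ < (u + 1) / 3 := by
    rw [← div_eq_mul_inv]
    exact div_lt_div_of_pos_left (by positivity) (by norm_num) hv
  have hquad : (u + 1) / 3 - 2 * u⁻¹ = u - 2 - (2 * u - 3) * (u - 2) / (3 * u) := by
    field_simp
    ring
  have := div_nonneg (mul_nonneg (by linarith : 0 ≤ 2 * u - 3) (by linarith : 0 ≤ u - 2))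
    (by positivity : 0 ≤ 3 * u)
  linarith

/-- Let `α ∈ (1,2)`, `β = α-1`, `B(a) = ∫_{-a-1}^{-a} (|1+z|^β - 1)/|z|^{1+α} dz`
and `G = P.V. ∫_{-1}^{1} (|1+z|^β + |1-z|^β - 2)/|z|^{1+α} dz`. Then `B(2) < -G/2`. -/
theorem B_two_lt_neg_half_G (α β G : ℝ) (hα1 : 1 < α) (hα2 : α < 2) (hβ : β = α - 1)
    (hG : Tendsto (fun b : ℝ =>
        ∫ z in {z : ℝ | b < |z| ∧ |z| < 1},
          (|1 + z| ^ β + |1 - z| ^ β - 2) / |z| ^ (1 + α))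
      (𝓝[>] (0 : ℝ)) (𝓝 G)) :
    (∫ z in (-(2 : ℝ) - 1)..(-2 : ℝ), (|1 + z| ^ β - 1) / |z| ^ (1 + α)) < -G / 2 := by
  subst hβ
  have hG_eq : G = -(2 * (2 ^ α - 2)) / α :=
    tendsto_nhds_unique hG (tendsto_G_truncation hα1.le hα2)
  calc ∫ z in (-(2 : ℝ) - 1)..(-2 : ℝ), (|1 + z| ^ (α - 1) - 1) / |z| ^ (1 + α)
      = ((2 ^ α + 1) * 3 ^ (-α) - 2 * 2 ^ (-α)) / α := by
        rw [intervalIntegral_B_integrand_eq hα1.le one_le_two]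
        norm_num
    _ < (2 ^ α - 2) / α :=
        div_lt_div_of_pos_right (two_rpow_add_one_mul_three_rpow_neg_sub_lt hα1) (by linarith)
    _ = -G / 2 := by rw [hG_eq]; ring
end

section
/- Let α ∈ (1,2), β = α - 1, and define B(a), G as in the previous context. Then there exists κ > 0 such that B(a) + G ≤ -κ < 0 for every a > 1. -/
/-!
With `β = α - 1`, the Möbius map `z ↦ z / (1 + z)` transforms
`ψ₊(z) = ((1 + z)^β - 1) / z^(1+α)` into `ψ₋(u) = (1 - (1 - u)^β) / u^(1+α)`, Jacobian included,
and sends `[b, 1]` onto `[b / (1 + b), 1/2]`. So the integral defining `G`, truncated at `b`, is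
`2 (∫_{b/(1+b)}^b ψ₋ - ∫_{1/2}^1 ψ₋)`; the first term is `O(b^(2-α))`, whence
`G = -2 ∫_{1/2}^1 ψ₋`. After `z = -1 - x`, `B(a) = ∫_{a-1}^a (x^β - 1) / (1 + x)^(1+α) dx`, whose
integrand is `≤ 0` for `x ≤ 1` and `≤ ψ₊(x)` for all `x > 0`; the same Möbius map sends `[1, ∞)`
into `[1/2, 1]`, so `B(a) ≤ ∫_{1/2}^1 ψ₋`. Hence `B(a) + G ≤ -∫_{1/2}^1 ψ₋ < 0`.
-/

open MeasureTheory Filter Topology Set intervalIntegral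

theorem setIntegral_abs_mem_Ioo_of_even {f : ℝ → ℝ} (hf : ∀ z, f (-z) = f z) {b c : ℝ}
    (hb : 0 ≤ b) (hbc : b ≤ c) (hint : IntervalIntegrable f volume b c) :
    ∫ z in {z : ℝ | b < |z| ∧ |z| < c}, f z = 2 * ∫ z in b..c, f z := by
  have hset : {z : ℝ | b < |z| ∧ |z| < c} = Ioo (-c) (-b) ∪ Ioo b c := by
    ext z
    simp only [mem_ofPred_eq, mem_union, mem_Ioo, lt_abs, abs_lt]
    constructor
    · rintro ⟨h | h, h1, h2⟩
      · exact Or.inr ⟨h, h2⟩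
      · exact Or.inl ⟨h1, by linarith⟩
    · rintro (⟨h1, h2⟩ | ⟨h1, h2⟩)
      · exact ⟨Or.inr (by linarith), h1, by linarith⟩
      · exact ⟨Or.inl h1, by linarith, h2⟩
  have hint' : IntervalIntegrable f volume (-c) (-b) := by
    simpa only [hf] using ((IntervalIntegrable.iff_comp_neg).mp hint).symm
  have hneg : ∫ z in (-c)..(-b), f z = ∫ z in b..c, f z := by
    simp only [← integral_comp_neg, hf]
  rw [hset, setIntegral_union (Set.disjoint_left.mpr fun z h h' => by linarith [h.2, h'.1])
    measurableSet_Ioo ((intervalIntegrable_iff_integrableOn_Ioo_of_le (by linarith)).mp hint')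
    ((intervalIntegrable_iff_integrableOn_Ioo_of_le hbc).mp hint),
    ← integral_Ioc_eq_integral_Ioo, ← integral_Ioc_eq_integral_Ioo,
    ← integral_of_le (by linarith), ← integral_of_le hbc, hneg, two_mul]

noncomputable section Kernels

variable {α : ℝ}

def psiPlus (α z : ℝ) : ℝ := ((1 + z) ^ (α - 1) - 1) / z ^ (1 + α)

def psiMinus (α z : ℝ) : ℝ := (1 - (1 - z) ^ (α - 1)) / z ^ (1 + α)

theorem continuousOn_psiPlus : ContinuousOn (psiPlus α) (Ioi 0) := by
  intro z (hz : 0 < z)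
  have h1 : 1 + z ≠ 0 := by positivity
  exact ((((continuousAt_const.add continuousAt_id).rpow_const (Or.inl h1)).sub
    continuousAt_const).div (continuousAt_id.rpow_const (Or.inl hz.ne'))
    (by positivity)).continuousWithinAt

theorem continuousOn_psiMinus (hα : 1 ≤ α) : ContinuousOn (psiMinus α) (Ioi 0) := by
  intro z (hz : 0 < z)
  exact ((continuousAt_const.sub ((continuousAt_const.sub continuousAt_id).rpow_const
    (Or.inr (by linarith)))).div (continuousAt_id.rpow_const (Or.inl hz.ne'))
    (by positivity)).continuousWithinAt

theorem intervalIntegrable_psiPlus {s t : ℝ} (hs : 0 < s) (ht : 0 < t) :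
    IntervalIntegrable (psiPlus α) volume s t :=
  (continuousOn_psiPlus.mono fun _ hx => lt_of_lt_of_le (lt_min hs ht) hx.1).intervalIntegrable

theorem intervalIntegrable_psiMinus (hα : 1 ≤ α) {s t : ℝ} (hs : 0 < s) (ht : 0 < t) :
    IntervalIntegrable (psiMinus α) volume s t :=
  ((continuousOn_psiMinus hα).mono
    fun _ hx => lt_of_lt_of_le (lt_min hs ht) hx.1).intervalIntegrable

theorem psiMinus_pos (hα : 1 < α) {z : ℝ} (hz0 : 0 < z) (hz1 : z ≤ 1) : 0 < psiMinus α z := by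
  have : (1 - z) ^ (α - 1) < 1 := by
    rcases hz1.lt_or_eq with hz1 | rfl
    · exact Real.rpow_lt_one (by linarith) (by linarith) (by linarith)
    · simp [Real.zero_rpow (by linarith : α - 1 ≠ 0)]
  exact div_pos (by linarith) (by positivity)

theorem psiMinus_nonneg (hα : 1 ≤ α) {z : ℝ} (hz0 : 0 < z) (hz1 : z ≤ 1) :
    0 ≤ psiMinus α z := by
  have : (1 - z) ^ (α - 1) ≤ 1 := Real.rpow_le_one (by linarith) (by linarith) (by linarith)
  exact div_nonneg (by linarith) (by positivity)

theorem psiMinus_le (hα1 : 1 ≤ α) (hα2 : α ≤ 2) {z : ℝ} (hz0 : 0 < z) (hz1 : z ≤ 1) :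
    psiMinus α z ≤ z ^ (2 - α) / z ^ 2 := by
  have hnum : 1 - (1 - z) ^ (α - 1) ≤ z := by
    have := Real.rpow_le_rpow_of_exponent_ge' (by linarith : 0 ≤ 1 - z) (by linarith)
      (by linarith : 0 ≤ α - 1) (by linarith : α - 1 ≤ 1)
    rw [Real.rpow_one] at this
    linarith
  have hpow : z ^ (2 - α) / z ^ 2 = z / z ^ (1 + α) := by
    rw [Real.rpow_sub hz0, Real.rpow_add hz0, Real.rpow_one, Real.rpow_two]
    field_simp
  rw [hpow]
  exact div_le_div_of_nonneg_right hnum (by positivity)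

theorem psiPlus_eq_psiMinus_comp {z : ℝ} (hz : 0 < z) :
    psiPlus α z = psiMinus α (z / (1 + z)) * (1 / (1 + z) ^ 2) := by
  have h1z : 0 < 1 + z := by linarith
  have e1 : 1 - z / (1 + z) = (1 + z)⁻¹ := by field_simp; ring
  have e2 : (1 + z) ^ (1 + α) = (1 + z) ^ (α - 1) * (1 + z) ^ 2 := by
    rw [← Real.rpow_two, ← Real.rpow_add h1z]; ring_nf
  have hA : 0 < (1 + z) ^ (α - 1) := by positivity
  unfold psiPlus psiMinus
  rw [e1, Real.inv_rpow h1z.le, Real.div_rpow hz.le h1z.le, e2]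
  field_simp

theorem integral_psiPlus_eq (hα : 1 ≤ α) {s t : ℝ} (hs : 0 < s) (ht : 0 < t) :
    ∫ z in s..t, psiPlus α z = ∫ u in s / (1 + s)..t / (1 + t), psiMinus α u := by
  have hpos : ∀ x ∈ uIcc s t, 0 < x := fun x hx => lt_of_lt_of_le (lt_min hs ht) hx.1
  have hderiv : ∀ x ∈ uIcc s t, HasDerivAt (fun z => z / (1 + z)) (1 / (1 + x) ^ 2) x := by
    intro x hx
    have h1x : 1 + x ≠ 0 := by linarith [hpos x hx]
    rw [show 1 / (1 + x) ^ 2 = (1 * (1 + x) - x * 1) / (1 + x) ^ 2 by ring]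
    exact (hasDerivAt_id x).div ((hasDerivAt_id x).const_add 1) h1x
  have hcont : ContinuousOn (fun x : ℝ => 1 / (1 + x) ^ 2) (uIcc s t) := by
    refine continuousOn_const.div (by fun_prop) fun x hx => ?_
    have := hpos x hx
    positivity
  rw [← integral_comp_mul_deriv' hderiv hcont ((continuousOn_psiMinus hα).mono ?_)]
  · exact integral_congr fun x hx => psiPlus_eq_psiMinus_comp (hpos x hx)
  · rintro _ ⟨x, hx, rfl⟩
    exact div_pos (hpos x hx) (by linarith [hpos x hx])

theorem integral_psiMinus_pos (hα : 1 < α) : 0 < ∫ u in (1 / 2 : ℝ)..1, psiMinus α u :=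
  intervalIntegral_pos_of_pos_on (intervalIntegrable_psiMinus hα.le (by norm_num) one_pos)
    (fun _ hx => psiMinus_pos hα (by linarith [hx.1]) hx.2.le) (by norm_num)

def farKernel (α x : ℝ) : ℝ := (x ^ (α - 1) - 1) / (1 + x) ^ (1 + α)

theorem continuousOn_farKernel : ContinuousOn (farKernel α) (Ioi 0) := by
  intro x (hx : 0 < x)
  have h1 : 0 < 1 + x := by linarith
  exact (((continuousAt_id.rpow_const (Or.inl hx.ne')).sub continuousAt_const).div
    ((continuousAt_const.add continuousAt_id).rpow_const (Or.inl h1.ne'))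
    (Real.rpow_pos_of_pos h1 _).ne').continuousWithinAt

theorem intervalIntegrable_farKernel {s t : ℝ} (hs : 0 < s) (ht : 0 < t) :
    IntervalIntegrable (farKernel α) volume s t :=
  (continuousOn_farKernel.mono
    fun _ hx => lt_of_lt_of_le (lt_min hs ht) hx.1).intervalIntegrable

theorem integral_farKernel_eq {a : ℝ} (ha : 1 < a) :
    ∫ z in (-a - 1)..(-a), (|1 + z| ^ (α - 1) - 1) / |z| ^ (1 + α) =
      ∫ x in (a - 1)..a, farKernel α x := by
  have h := integral_comp_sub_left (a := a - 1) (b := a)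
    (fun z => (|1 + z| ^ (α - 1) - 1) / |z| ^ (1 + α)) (-1)
  rw [show -1 - a = -a - 1 by ring, show -1 - (a - 1) = -a by ring] at h
  rw [← h]
  refine integral_congr fun x hx => ?_
  have hx0 : 0 < x := by linarith [(uIcc_of_le (by linarith : a - 1 ≤ a) ▸ hx).1]
  rw [show 1 + (-1 - x) = -x by ring, show -1 - x = -(1 + x) by ring, abs_neg, abs_neg,
    abs_of_pos hx0, abs_of_pos (by linarith : 0 < 1 + x)]
  rfl

theorem farKernel_nonpos (hα : 1 ≤ α) {x : ℝ} (hx0 : 0 < x) (hx1 : x ≤ 1) :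
    farKernel α x ≤ 0 :=
  div_nonpos_of_nonpos_of_nonneg
    (by linarith [Real.rpow_le_one hx0.le hx1 (by linarith : 0 ≤ α - 1)]) (by positivity)

theorem farKernel_le_psiPlus (hα : 1 ≤ α) {x : ℝ} (hx : 0 < x) :
    farKernel α x ≤ psiPlus α x := by
  have hone : 1 ≤ (1 + x) ^ (α - 1) := Real.one_le_rpow (by linarith) (by linarith)
  rcases le_total (x ^ (α - 1)) 1 with hle | hge
  · calc farKernel α x ≤ 0 := div_nonpos_of_nonpos_of_nonneg (by linarith) (by positivity)
      _ ≤ psiPlus α x := div_nonneg (by linarith) (by positivity)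
  · exact div_le_div₀ (by linarith)
      (by linarith [Real.rpow_le_rpow hx.le (by linarith : x ≤ 1 + x) (by linarith : 0 ≤ α - 1)])
      (by positivity) (Real.rpow_le_rpow hx.le (by linarith) (by linarith))

theorem integral_farKernel_le_of_one_le (hα : 1 ≤ α) {s t : ℝ} (hs : 1 ≤ s) (hst : s ≤ t) :
    ∫ x in s..t, farKernel α x ≤ ∫ u in (1 / 2 : ℝ)..1, psiMinus α u := by
  have hs0 : 0 < s := by linarith
  have ht0 : 0 < t := by linarith
  calc ∫ x in s..t, farKernel α x ≤ ∫ x in s..t, psiPlus α x :=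
        integral_mono_on hst (intervalIntegrable_farKernel hs0 ht0)
          (intervalIntegrable_psiPlus hs0 ht0)
          fun x hx => farKernel_le_psiPlus hα (by linarith [hx.1])
    _ = ∫ u in s / (1 + s)..t / (1 + t), psiMinus α u := integral_psiPlus_eq hα hs0 ht0
    _ ≤ ∫ u in (1 / 2 : ℝ)..1, psiMinus α u := by
      refine integral_mono_interval ?_ ?_ ?_ ?_
        (intervalIntegrable_psiMinus hα (by norm_num) one_pos)
      · rw [le_div_iff₀ (by linarith)]; linarith
      · rw [div_le_div_iff₀ (by linarith) (by linarith)]; linarith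
      · rw [div_le_one (by linarith)]; linarith
      · filter_upwards [ae_restrict_mem measurableSet_Ioc] with u hu
        exact psiMinus_nonneg hα (by linarith [hu.1]) hu.2

theorem integral_farKernel_le (hα : 1 ≤ α) {a : ℝ} (ha : 1 < a) :
    ∫ x in (a - 1)..a, farKernel α x ≤ ∫ u in (1 / 2 : ℝ)..1, psiMinus α u := by
  rcases le_total a 2 with ha2 | ha2
  · have hnear : ∫ x in (a - 1)..1, farKernel α x ≤ 0 := by
      simpa using integral_mono_on (by linarith) (intervalIntegrable_farKernel (α := α)
        (by linarith) one_pos) intervalIntegrable_const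
        fun x hx => farKernel_nonpos hα (by linarith [hx.1]) hx.2
    rw [← integral_add_adjacent_intervals (b := 1) (intervalIntegrable_farKernel (by linarith)
      one_pos) (intervalIntegrable_farKernel one_pos (by linarith))]
    linarith [integral_farKernel_le_of_one_le hα le_rfl ha.le]
  · exact integral_farKernel_le_of_one_le hα (by linarith) (by linarith)

theorem integral_psiMinus_le_rpow (hα1 : 1 ≤ α) (hα2 : α ≤ 2) {b : ℝ} (hb0 : 0 < b)
    (hb1 : b ≤ 1) : ∫ u in b / (1 + b)..b, psiMinus α u ≤ 2 * b ^ (2 - α) := by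
  set η := b / (1 + b)
  have hη0 : 0 < η := by positivity
  have hηb : η ≤ b := div_le_self hb0.le (by linarith)
  have hbound : ∀ u ∈ Icc η b, psiMinus α u ≤ b ^ (2 - α) / η ^ 2 := fun u hu =>
    have hu0 : 0 < u := hη0.trans_le hu.1
    (psiMinus_le hα1 hα2 hu0 (hu.2.trans hb1)).trans <|
      div_le_div₀ (by positivity) (Real.rpow_le_rpow hu0.le hu.2 (by linarith)) (by positivity)
        (pow_le_pow_left₀ hη0.le hu.1 2)
  have hmono := integral_mono_on hηb (intervalIntegrable_psiMinus hα1 hη0 hb0)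
    intervalIntegrable_const hbound
  have hconst : (b - η) * (b ^ (2 - α) / η ^ 2) = (1 + b) * b ^ (2 - α) := by
    simp only [η]
    field_simp
    ring
  rw [intervalIntegral.integral_const, smul_eq_mul, hconst] at hmono
  nlinarith [Real.rpow_nonneg hb0.le (2 - α)]

theorem tendsto_integral_psiMinus_nhdsGT (hα1 : 1 ≤ α) (hα2 : α < 2) :
    Tendsto (fun b => ∫ u in b / (1 + b)..b, psiMinus α u) (𝓝[>] 0) (𝓝 0) := by
  have hlim : Tendsto (fun b : ℝ => 2 * b ^ (2 - α)) (𝓝[>] 0) (𝓝 0) := by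
    have : Tendsto (fun b : ℝ => 2 * b ^ (2 - α)) (𝓝[>] 0) (𝓝 (2 * 0 ^ (2 - α))) :=
      ((Real.continuousAt_rpow_const 0 (2 - α) (Or.inr (by linarith))).tendsto.const_mul
        2).mono_left nhdsWithin_le_nhds
    rwa [Real.zero_rpow (by linarith), mul_zero] at this
  refine tendsto_of_tendsto_of_tendsto_of_le_of_le' tendsto_const_nhds hlim ?_ ?_ <;>
    filter_upwards [Ioo_mem_nhdsGT one_pos] with b hb
  · exact integral_nonneg (div_le_self hb.1.le (by linarith [hb.1])) fun u hu =>
      psiMinus_nonneg hα1 ((div_pos hb.1 (by linarith [hb.1])).trans_le hu.1) (hu.2.trans hb.2.le)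
  · exact integral_psiMinus_le_rpow hα1 hα2.le hb.1 hb.2.le

def nearKernel (α z : ℝ) : ℝ := (|1 + z| ^ (α - 1) + |1 - z| ^ (α - 1) - 2) / |z| ^ (1 + α)

theorem nearKernel_neg (z : ℝ) : nearKernel α (-z) = nearKernel α z := by
  simp only [nearKernel, abs_neg, ← sub_eq_add_neg, sub_neg_eq_add]
  ring

theorem nearKernel_eq_psiPlus_sub_psiMinus {z : ℝ} (hz0 : 0 < z) (hz1 : z ≤ 1) :
    nearKernel α z = psiPlus α z - psiMinus α z := by
  rw [nearKernel, psiPlus, psiMinus, abs_of_pos hz0, abs_of_pos (by linarith : 0 < 1 + z),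
    abs_of_nonneg (by linarith : 0 ≤ 1 - z), div_sub_div_same]
  ring_nf

theorem integral_nearKernel_eq (hα : 1 ≤ α) {b : ℝ} (hb0 : 0 < b) (hb1 : b ≤ 1) :
    ∫ z in {z : ℝ | b < |z| ∧ |z| < 1}, nearKernel α z =
      2 * ((∫ u in b / (1 + b)..b, psiMinus α u) - ∫ u in (1 / 2 : ℝ)..1, psiMinus α u) := by
  have heq : EqOn (fun z => psiPlus α z - psiMinus α z) (nearKernel α) (uIcc b 1) := by
    intro z hz
    rw [uIcc_of_le hb1] at hz
    exact (nearKernel_eq_psiPlus_sub_psiMinus (hb0.trans_le hz.1) hz.2).symm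
  have hplus := intervalIntegrable_psiPlus (α := α) hb0 one_pos
  have hminus : ∀ {s t : ℝ}, 0 < s → 0 < t → IntervalIntegrable (psiMinus α) volume s t :=
    intervalIntegrable_psiMinus hα
  have hη : 0 < b / (1 + b) := by positivity
  rw [setIntegral_abs_mem_Ioo_of_even nearKernel_neg hb0.le hb1
      ((hplus.sub (hminus hb0 one_pos)).congr (heq.mono uIoc_subset_uIcc)),
    ← integral_congr heq, integral_sub hplus (hminus hb0 one_pos),
    integral_psiPlus_eq hα hb0 one_pos, integral_interval_sub_interval_comm
      (hminus hη (by norm_num)) (hminus hb0 one_pos) (hminus hη hb0)]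
  norm_num

theorem tendsto_integral_nearKernel (hα1 : 1 ≤ α) (hα2 : α < 2) :
    Tendsto (fun b => ∫ z in {z : ℝ | b < |z| ∧ |z| < 1}, nearKernel α z) (𝓝[>] 0)
      (𝓝 (-2 * ∫ u in (1 / 2 : ℝ)..1, psiMinus α u)) := by
  have h := ((tendsto_integral_psiMinus_nhdsGT hα1 hα2).sub_const
    (∫ u in (1 / 2 : ℝ)..1, psiMinus α u)).const_mul 2
  rw [zero_sub, mul_neg, ← neg_mul] at h
  refine h.congr' ?_
  filter_upwards [Ioo_mem_nhdsGT one_pos] with b hb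
  exact (integral_nearKernel_eq hα1 hb.1 hb.2.le).symm

end Kernels

/-- Let `α ∈ (1,2)`, `β = α-1`, `B(a) = ∫_{-a-1}^{-a} (|1+z|^β - 1)/|z|^{1+α} dz` for
`a > 1`, and `G = P.V. ∫_{-1}^{1} (|1+z|^β + |1-z|^β - 2)/|z|^{1+α} dz`. Then there is
`κ > 0` such that `B(a) + G ≤ -κ < 0` for every `a > 1`. -/
theorem B_add_G_neg_uniform (α β G : ℝ) (hα1 : 1 < α) (hα2 : α < 2) (hβ : β = α - 1)
    (hG : Tendsto (fun b : ℝ =>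
        ∫ z in {z : ℝ | b < |z| ∧ |z| < 1},
          (|1 + z| ^ β + |1 - z| ^ β - 2) / |z| ^ (1 + α))
      (𝓝[>] (0 : ℝ)) (𝓝 G)) :
    ∃ κ : ℝ, 0 < κ ∧ ∀ a : ℝ, 1 < a →
      (∫ z in (-a - 1)..(-a), (|1 + z| ^ β - 1) / |z| ^ (1 + α)) + G ≤ -κ := by
  subst hβ
  have hG' : G = -2 * ∫ u in (1 / 2 : ℝ)..1, psiMinus α u :=
    tendsto_nhds_unique hG (tendsto_integral_nearKernel hα1.le hα2)
  refine ⟨_, integral_psiMinus_pos hα1, fun a ha => ?_⟩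
  rw [integral_farKernel_eq ha, hG']
  linarith [integral_farKernel_le hα1.le ha]
end

section
/- Let α ∈ (1,2) and β = α - 1. Then G = P.V. ∫_{-1}^{1} (|1+z|^β + |1-z|^β - 2)/|z|^{1+α} dz equals -2 ∫_{ln 2}^{∞} 2 sinh(βx/2)/|2 sinh(x/2)|^{1+α} dx, and in particular G < 0. -/
/-!
Write the integrand as `h z + h (-z)` with `h z = (|1 + z| ^ β - 1) / |z| ^ (1 + α)`; the region
`b < |z| < 1` is symmetric, so the truncated integral is twice that of `h`. Under `1 + z = eˣ` the
density `eˣ h (eˣ - 1)` becomes the odd function `2 sinh (β x / 2) / |2 sinh (x / 2)| ^ (1 + α)`,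
precisely because `β = α - 1`. The region, enlarged by the sliver `[-b, -b / (1 + b))`, is the
image of `(-∞, -log (1 + b)) ∪ (log (1 + b), log 2)`, over which, by oddness, the integral is
`-∫_{log 2}^∞`. The sliver has length `O(b²)` and `|h z| ≤ |z| ^ (-α) = O(b ^ (-α))` on it, so its
contribution is `O(b ^ (2 - α)) → 0`. The limit is negative because the sinh integrand is positive
for `x > 0`.
-/

open MeasureTheory Filter Topology Set Real Metric

noncomputable def halfIntegrand (α β z : ℝ) : ℝ := (|1 + z| ^ β - 1) / |z| ^ (1 + α)

noncomputable def sinhIntegrand (α β x : ℝ) : ℝ :=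
  2 * sinh (β * x / 2) / |2 * sinh (x / 2)| ^ (1 + α)

section

variable {α β : ℝ}

lemma integrand_eq_halfIntegrand_add (z : ℝ) :
    (|1 + z| ^ β + |1 - z| ^ β - 2) / |z| ^ (1 + α) =
      halfIntegrand α β z + halfIntegrand α β (-z) := by
  simp only [halfIntegrand, abs_neg, ← sub_eq_add_neg, ← add_div]
  ring_nf

lemma sinhIntegrand_neg (x : ℝ) : sinhIntegrand α β (-x) = -sinhIntegrand α β x := by
  simp only [sinhIntegrand, mul_neg, neg_div, sinh_neg, abs_neg]

lemma two_mul_sinh_half (x : ℝ) : 2 * sinh (x / 2) = exp (-(x / 2)) * (exp x - 1) := by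
  rw [sinh_eq, mul_sub, ← exp_add, show -(x / 2) + x = x / 2 by ring]
  ring

lemma exp_mul_halfIntegrand_exp_sub_one (hβ : β = α - 1) (x : ℝ) :
    exp x * halfIntegrand α β (exp x - 1) = sinhIntegrand α β x := by
  have hnum : exp x * (exp x ^ β - 1) = exp (x / 2 * (1 + α)) * (2 * sinh (β * x / 2)) := by
    rw [← exp_mul, two_mul_sinh_half, ← mul_assoc, ← exp_add, hβ]
    ring_nf
  have hden : |exp x - 1| ^ (1 + α) = exp (x / 2 * (1 + α)) * |2 * sinh (x / 2)| ^ (1 + α) := by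
    rw [two_mul_sinh_half x, abs_mul, abs_of_pos (exp_pos _),
      mul_rpow (exp_pos _).le (abs_nonneg _), ← exp_mul, ← mul_assoc, ← exp_add]
    ring_nf
    simp
  rw [halfIntegrand, sinhIntegrand, add_sub_cancel, abs_of_pos (exp_pos x), ← mul_div_assoc, hnum,
    hden, mul_div_mul_left _ _ (exp_pos _).ne']

lemma setIntegral_image_exp_sub_one_halfIntegrand (hβ : β = α - 1) {s : Set ℝ}
    (hs : MeasurableSet s) :
    ∫ z in (fun x => exp x - 1) '' s, halfIntegrand α β z = ∫ x in s, sinhIntegrand α β x := by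
  rw [integral_image_eq_integral_abs_deriv_smul hs
    (fun x _ => ((hasDerivAt_exp x).sub_const 1).hasDerivWithinAt)
    (fun a _ b _ h => exp_injective (sub_left_injective h))]
  simp only [abs_of_pos (exp_pos _), smul_eq_mul, exp_mul_halfIntegrand_exp_sub_one hβ]

lemma image_exp_sub_one_Iio (a : ℝ) :
    (fun x => exp x - 1) '' Iio a = Ioo (-1) (exp a - 1) := by
  rw [← image_image (· - 1) exp, image_exp_Iio, image_sub_const_Ioo, zero_sub]

lemma image_exp_sub_one_Ioo (a b : ℝ) :
    (fun x => exp x - 1) '' Ioo a b = Ioo (exp a - 1) (exp b - 1) := by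
  rw [← image_image (· - 1) exp, image_exp_Ioo, image_sub_const_Ioo]

lemma continuousOn_halfIntegrand (hβ : 0 ≤ β) : ContinuousOn (halfIntegrand α β) {0}ᶜ := by
  intro z hz
  refine ContinuousAt.continuousWithinAt (ContinuousAt.div ?_ ?_ ?_)
  · fun_prop (disch := exact Or.inr hβ)
  · fun_prop (disch := exact Or.inl (abs_ne_zero.2 hz))
  · exact (rpow_pos_of_pos (abs_pos.2 hz) _).ne'

lemma integrableOn_halfIntegrand (hβ : 0 ≤ β) {r : ℝ} (hr : 0 < r) :
    IntegrableOn (halfIntegrand α β) {z | r ≤ |z| ∧ |z| ≤ 1} := by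
  have hset : {z : ℝ | r ≤ |z| ∧ |z| ≤ 1} = closedBall 0 1 \ ball 0 r := by
    ext z
    simp [and_comm]
  rw [hset]
  refine ((continuousOn_halfIntegrand hβ).mono fun z hz h => hz.2 ?_).integrableOn_compact
    ((isCompact_closedBall 0 1).diff isOpen_ball)
  rw [mem_singleton_iff.1 h]
  exact mem_ball_self hr

lemma annulus_union_Ico {a b : ℝ} (ha : 0 < a) (hab : a < b) (hb : b < 1) :
    {z : ℝ | b < |z| ∧ |z| < 1} ∪ Ico (-b) (-a) = Ioo (-1) (-a) ∪ Ioo b 1 := by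
  ext z
  grind

lemma setIntegral_annulus_add_setIntegral_Ico {f : ℝ → ℝ} {a b : ℝ} (ha : 0 < a) (hab : a < b)
    (hb : b < 1) (hf : IntegrableOn f {z | a ≤ |z| ∧ |z| ≤ 1}) :
    (∫ z in {z : ℝ | b < |z| ∧ |z| < 1}, f z) + ∫ z in Ico (-b) (-a), f z =
      (∫ z in Ioo (-1) (-a), f z) + ∫ z in Ioo b 1, f z := by
  have hunion := annulus_union_Ico ha hab hb
  have hsub : Ioo (-1) (-a) ∪ Ioo b 1 ⊆ {z | a ≤ |z| ∧ |z| ≤ 1} := by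
    rintro z (⟨h1, h2⟩ | ⟨h1, h2⟩)
    · show a ≤ |z| ∧ |z| ≤ 1
      rw [abs_of_neg (by linarith)]
      constructor <;> linarith
    · show a ≤ |z| ∧ |z| ≤ 1
      rw [abs_of_pos (by linarith)]
      constructor <;> linarith
  have hdisj : Disjoint {z : ℝ | b < |z| ∧ |z| < 1} (Ico (-b) (-a)) :=
    disjoint_left.2 fun z ⟨h1, _⟩ ⟨_, h4⟩ => by rw [abs_of_neg (by linarith)] at h1; linarith
  have hdisj' : Disjoint (Ioo (-1) (-a)) (Ioo b 1) :=
    disjoint_left.2 fun z ⟨_, h2⟩ ⟨h3, _⟩ => by linarith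
  rw [← setIntegral_union hdisj measurableSet_Ico
      (hf.mono_set ((subset_union_left.trans hunion.le).trans hsub))
      (hf.mono_set ((subset_union_right.trans hunion.le).trans hsub)),
    ← setIntegral_union hdisj' measurableSet_Ioo
      (hf.mono_set (subset_union_left.trans hsub)) (hf.mono_set (subset_union_right.trans hsub)),
    hunion]

lemma setIntegral_comp_neg_of_neg_eq {E : Type*} [NormedAddCommGroup E] [NormedSpace ℝ E]
    (f : ℝ → E) {s : Set ℝ} (hs : -s = s) : ∫ x in s, f (-x) = ∫ x in s, f x := by
  conv_lhs => rw [← hs, ← neg_preimage]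
  exact (Measure.measurePreserving_neg volume).setIntegral_preimage_emb
    measurableEmbedding_neg f s

lemma setIntegral_integrand_eq_two_mul {s : Set ℝ} (hs : -s = s)
    (hint : IntegrableOn (halfIntegrand α β) s) :
    ∫ z in s, (|1 + z| ^ β + |1 - z| ^ β - 2) / |z| ^ (1 + α) =
      2 * ∫ z in s, halfIntegrand α β z := by
  have hint_neg : IntegrableOn (fun z => halfIntegrand α β (-z)) s := by
    have h := ((Measure.measurePreserving_neg volume).integrableOn_comp_preimage
      measurableEmbedding_neg).2 hint
    rwa [neg_preimage, hs] at h
  simp only [integrand_eq_halfIntegrand_add]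
  rw [integral_add hint hint_neg, setIntegral_comp_neg_of_neg_eq _ hs]
  ring

lemma abs_two_mul_sinh_le (y : ℝ) : |2 * sinh y| ≤ exp |y| := by
  rw [abs_mul, abs_two, abs_sinh, sinh_eq]
  linarith [exp_pos (-|y|)]

lemma exp_mul_one_sub_exp_neg_le_two_mul_sinh {t x : ℝ} (htx : t ≤ x) :
    exp (x / 2) * (1 - exp (-t)) ≤ 2 * sinh (x / 2) := by
  rw [sinh_eq, mul_sub, mul_one, ← exp_add]
  linarith [exp_le_exp.2 (show -(x / 2) ≤ x / 2 + -t by linarith)]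

lemma abs_sinhIntegrand_le {t x : ℝ} (ht : 0 < t) (htx : t ≤ x) (hα : 0 ≤ 1 + α) :
    |sinhIntegrand α β x| ≤
      (1 - exp (-t)) ^ (-(1 + α)) * exp (-((1 + α - |β|) / 2) * x) := by
  have hδ : 0 < 1 - exp (-t) := by linarith [exp_lt_one_iff.2 (neg_lt_zero.2 ht)]
  have hx : 0 < x := ht.trans_le htx
  have hlow := exp_mul_one_sub_exp_neg_le_two_mul_sinh htx
  have hpos : 0 < exp (x / 2) * (1 - exp (-t)) := mul_pos (exp_pos _) hδ
  calc |sinhIntegrand α β x|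
      ≤ exp |β * x / 2| / (exp (x / 2) * (1 - exp (-t))) ^ (1 + α) := by
        rw [sinhIntegrand, abs_div, abs_of_nonneg (rpow_nonneg (abs_nonneg _) _)]
        refine div_le_div₀ (exp_pos _).le (abs_two_mul_sinh_le _) (rpow_pos_of_pos hpos _) ?_
        exact rpow_le_rpow hpos.le (hlow.trans (le_abs_self _)) hα
    _ = (1 - exp (-t)) ^ (-(1 + α)) * exp (-((1 + α - |β|) / 2) * x) := by
        rw [mul_rpow (exp_pos _).le hδ.le, ← exp_mul, rpow_neg hδ.le, abs_div, abs_mul,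
          abs_of_pos hx, abs_two, div_mul_eq_div_div, div_eq_mul_inv, div_eq_mul_inv, ← exp_neg,
          ← exp_add, mul_comm]
        ring_nf

lemma integrableOn_sinhIntegrand_Ioi {t : ℝ} (ht : 0 < t) (hβα : |β| < 1 + α) :
    IntegrableOn (sinhIntegrand α β) (Ioi t) := by
  refine Integrable.mono' ((exp_neg_integrableOn_Ioi t (by linarith : 0 < (1 + α - |β|) / 2)
    ).const_mul ((1 - exp (-t)) ^ (-(1 + α)))) ?_ ?_
  · exact (by unfold sinhIntegrand; fun_prop : Measurable (sinhIntegrand α β)).aestronglyMeasurable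
  · refine (ae_restrict_iff' measurableSet_Ioi).2 (ae_of_all _ fun x hx => ?_)
    rw [norm_eq_abs]
    exact abs_sinhIntegrand_le ht (le_of_lt hx) (by linarith [abs_nonneg β])

lemma setIntegral_Iio_neg_add_setIntegral_Ioo_sinhIntegrand {t c : ℝ} (ht : 0 < t) (htc : t ≤ c)
    (hβα : |β| < 1 + α) :
    (∫ x in Iio (-t), sinhIntegrand α β x) + ∫ x in Ioo t c, sinhIntegrand α β x =
      -∫ x in Ioi c, sinhIntegrand α β x := by
  have hint := integrableOn_sinhIntegrand_Ioi ht hβα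
  have hodd : ∫ x in Iio (-t), sinhIntegrand α β x = -∫ x in Ioi t, sinhIntegrand α β x := by
    rw [← integral_Iic_eq_integral_Iio, ← integral_comp_neg_Ioi, ← integral_neg]
    simp only [sinhIntegrand_neg]
  have hsplit : ∫ x in Ioi t, sinhIntegrand α β x =
      (∫ x in Ioo t c, sinhIntegrand α β x) + ∫ x in Ioi c, sinhIntegrand α β x := by
    rw [← integral_Ioc_eq_integral_Ioo]
    rw [← Ioc_union_Ioi_eq_Ioi htc] at hint ⊢
    exact setIntegral_union Ioc_disjoint_Ioi_same measurableSet_Ioi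
      (hint.mono_set subset_union_left) (hint.mono_set subset_union_right)
  rw [hodd, hsplit]
  ring

lemma setIntegral_sinhIntegrand_Ioi_pos {c : ℝ} (hc : 0 < c) (hβ : 0 < β) (hβα : β < 1 + α) :
    0 < ∫ x in Ioi c, sinhIntegrand α β x := by
  have hpos : ∀ x ∈ Ioi c, 0 < sinhIntegrand α β x := fun x hx => by
    have hx : 0 < x := hc.trans hx
    exact div_pos (mul_pos two_pos (sinh_pos_iff.2 (by positivity)))
      (rpow_pos_of_pos (abs_pos.2 (mul_pos two_pos (sinh_pos_iff.2 (by positivity))).ne') _)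
  have hsupp : Ioi c ⊆ Function.support (sinhIntegrand α β) := fun x hx => (hpos x hx).ne'
  rw [setIntegral_pos_iff_support_of_nonneg_ae
    ((ae_restrict_iff' measurableSet_Ioi).2 (ae_of_all _ fun x hx => (hpos x hx).le))
    (integrableOn_sinhIntegrand_Ioi hc (by rwa [abs_of_pos hβ])),
    inter_eq_self_of_subset_right hsupp, volume_Ioi]
  exact ENNReal.zero_lt_top

lemma abs_rpow_sub_one_le {u : ℝ} (hu : 0 ≤ u) (hβ0 : 0 ≤ β) (hβ1 : β ≤ 1) :
    |u ^ β - 1| ≤ |u - 1| := by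
  rcases le_total u 1 with hu1 | hu1
  · have hlow : u ≤ u ^ β := by
      simpa using rpow_le_rpow_of_exponent_ge' hu hu1 hβ0 hβ1
    rw [abs_of_nonpos (by linarith [rpow_le_one hu hu1 hβ0]), abs_of_nonpos (by linarith)]
    linarith
  · have hup : u ^ β ≤ u := by simpa using rpow_le_rpow_of_exponent_le hu1 hβ1
    rw [abs_of_nonneg (by linarith [one_le_rpow hu1 hβ0]), abs_of_nonneg (by linarith)]
    linarith

lemma abs_halfIntegrand_le (hβ0 : 0 ≤ β) (hβ1 : β ≤ 1) {z : ℝ} (hz : -1 ≤ z) :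
    |halfIntegrand α β z| ≤ |z| ^ (-α) := by
  rcases eq_or_ne z 0 with rfl | hz0
  · simp [halfIntegrand, rpow_nonneg]
  have hpos : 0 < |z| := abs_pos.2 hz0
  calc |halfIntegrand α β z| ≤ |z| / |z| ^ (1 + α) := by
        rw [halfIntegrand, abs_div, abs_of_pos (rpow_pos_of_pos hpos _)]
        refine div_le_div_of_nonneg_right ?_ (rpow_nonneg hpos.le _)
        have h := abs_rpow_sub_one_le (by linarith : 0 ≤ 1 + z) hβ0 hβ1
        rwa [add_sub_cancel_left, ← abs_of_nonneg (by linarith : 0 ≤ 1 + z)] at h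
    _ = |z| ^ (-α) := by rw [show -α = 1 - (1 + α) by ring, rpow_sub hpos, rpow_one]

lemma norm_setIntegral_halfIntegrand_Ico_le (hα : 0 ≤ α) (hβ0 : 0 ≤ β) (hβ1 : β ≤ 1) {b : ℝ}
    (hb0 : 0 < b) (hb1 : b ≤ 1) :
    ‖∫ z in Ico (-b) (-(b / (1 + b))), halfIntegrand α β z‖ ≤ 2 ^ α * b ^ (2 - α) := by
  have hb2 : 0 < b / 2 := by positivity
  have hab : b / 2 ≤ b / (1 + b) := div_le_div_of_nonneg_left hb0.le (by linarith) (by linarith)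
  have hab' : b / (1 + b) ≤ b := div_le_self hb0.le (by linarith)
  have hbound : ∀ z ∈ Ico (-b) (-(b / (1 + b))), ‖halfIntegrand α β z‖ ≤ (b / 2) ^ (-α) := by
    rintro z ⟨hzb, hza⟩
    have hz : b / 2 ≤ |z| := by rw [abs_of_neg (by linarith)]; linarith
    exact (abs_halfIntegrand_le hβ0 hβ1 (by linarith)).trans
      (rpow_le_rpow_of_nonpos hb2 hz (neg_nonpos.2 hα))
  have hlen : -(b / (1 + b)) - -b = b ^ 2 / (1 + b) := by field_simp; ring
  calc ‖∫ z in Ico (-b) (-(b / (1 + b))), halfIntegrand α β z‖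
      ≤ (b / 2) ^ (-α) * volume.real (Ico (-b) (-(b / (1 + b)))) :=
        norm_setIntegral_le_of_norm_le_const measure_Ico_lt_top hbound
    _ ≤ (b / 2) ^ (-α) * b ^ 2 := by
        rw [volume_real_Ico_of_le (by linarith), hlen]
        gcongr
        exact div_le_self (sq_nonneg b) (by linarith)
    _ = 2 ^ α * b ^ (2 - α) := by
        rw [div_rpow hb0.le zero_le_two, rpow_neg hb0.le, rpow_neg zero_le_two, div_inv_eq_mul,
          show 2 - α = -α + 2 by ring, rpow_add hb0, rpow_neg hb0.le, rpow_two]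
        ring

lemma tendsto_setIntegral_halfIntegrand_Ico (hα0 : 0 ≤ α) (hα2 : α < 2) (hβ0 : 0 ≤ β)
    (hβ1 : β ≤ 1) :
    Tendsto (fun b => ∫ z in Ico (-b) (-(b / (1 + b))), halfIntegrand α β z) (𝓝[>] 0) (𝓝 0) := by
  refine squeeze_zero_norm' (a := fun b => 2 ^ α * b ^ (2 - α)) ?_ ?_
  · filter_upwards [Ioo_mem_nhdsGT one_pos] with b hb
    exact norm_setIntegral_halfIntegrand_Ico_le hα0 hβ0 hβ1 hb.1 hb.2.le
  · have h := ((continuous_rpow_const (by linarith : 0 ≤ 2 - α)).tendsto 0).const_mul (2 ^ α)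
    rw [zero_rpow (by linarith : 2 - α ≠ 0), mul_zero] at h
    exact h.mono_left nhdsWithin_le_nhds

lemma setIntegral_annulus_halfIntegrand (hα : 1 ≤ α) (hβ : β = α - 1) {b : ℝ} (hb0 : 0 < b)
    (hb1 : b < 1) :
    ∫ z in {z : ℝ | b < |z| ∧ |z| < 1}, halfIntegrand α β z =
      -(∫ x in Ioi (log 2), sinhIntegrand α β x) -
        ∫ z in Ico (-b) (-(b / (1 + b))), halfIntegrand α β z := by
  have hleft : Ioo (-1) (-(b / (1 + b))) = (fun x => exp x - 1) '' Iio (-log (1 + b)) := by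
    rw [image_exp_sub_one_Iio, exp_neg, exp_log (by linarith)]
    congr 1
    field_simp
    ring
  have hright : Ioo b 1 = (fun x => exp x - 1) '' Ioo (log (1 + b)) (log 2) := by
    rw [image_exp_sub_one_Ioo, exp_log (by linarith), exp_log two_pos]
    norm_num
  have ha0 : 0 < b / (1 + b) := by positivity
  have hsum := setIntegral_annulus_add_setIntegral_Ico ha0 (div_lt_self hb0 (by linarith)) hb1
    (integrableOn_halfIntegrand (α := α) (β := β) (by linarith) ha0)
  rw [hleft, hright, setIntegral_image_exp_sub_one_halfIntegrand hβ measurableSet_Iio,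
    setIntegral_image_exp_sub_one_halfIntegrand hβ measurableSet_Ioo,
    setIntegral_Iio_neg_add_setIntegral_Ioo_sinhIntegrand (log_pos (by linarith))
      (log_le_log (by linarith) (by linarith)) (by rw [abs_of_nonneg (by linarith)]; linarith)]
    at hsum
  linarith

lemma setIntegral_annulus_integrand (hα : 1 ≤ α) (hβ : β = α - 1) {b : ℝ} (hb0 : 0 < b)
    (hb1 : b < 1) :
    ∫ z in {z : ℝ | b < |z| ∧ |z| < 1}, (|1 + z| ^ β + |1 - z| ^ β - 2) / |z| ^ (1 + α) =
      2 * (-(∫ x in Ioi (log 2), sinhIntegrand α β x) -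
        ∫ z in Ico (-b) (-(b / (1 + b))), halfIntegrand α β z) := by
  have hsymm : -{z : ℝ | b < |z| ∧ |z| < 1} = {z : ℝ | b < |z| ∧ |z| < 1} := by
    ext z
    simp
  have hint : IntegrableOn (halfIntegrand α β) {z : ℝ | b < |z| ∧ |z| < 1} :=
    (integrableOn_halfIntegrand (by linarith) hb0).mono_set fun z hz => ⟨hz.1.le, hz.2.le⟩
  rw [setIntegral_integrand_eq_two_mul hsymm hint, setIntegral_annulus_halfIntegrand hα hβ hb0 hb1]

end

/-- For `α ∈ (1,2)` and `β = α-1`, the principal value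
`G = P.V. ∫_{-1}^{1} (|1+z|^β + |1-z|^β - 2)/|z|^{1+α} dz` equals
`-2 ∫_{ln 2}^{∞} 2 sinh(βx/2)/|2 sinh(x/2)|^{1+α} dx`, and in particular `G < 0`. -/
theorem G_eq_and_neg (α β : ℝ) (hα1 : 1 < α) (hα2 : α < 2) (hβ : β = α - 1) :
    Tendsto (fun b : ℝ =>
        ∫ z in {z : ℝ | b < |z| ∧ |z| < 1},
          (|1 + z| ^ β + |1 - z| ^ β - 2) / |z| ^ (1 + α))
      (𝓝[>] (0 : ℝ))
      (𝓝 (-2 * ∫ x in Set.Ioi (Real.log 2),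
            2 * Real.sinh (β * x / 2) / |2 * Real.sinh (x / 2)| ^ (1 + α))) ∧
    -2 * (∫ x in Set.Ioi (Real.log 2),
        2 * Real.sinh (β * x / 2) / |2 * Real.sinh (x / 2)| ^ (1 + α)) < 0 := by
  set J := ∫ x in Ioi (log 2), sinhIntegrand α β x
  have hJ : 0 < J :=
    setIntegral_sinhIntegrand_Ioi_pos (log_pos one_lt_two) (by linarith) (by linarith)
  have hE := tendsto_setIntegral_halfIntegrand_Ico (α := α) (β := β) (by linarith) hα2
    (by linarith) (by linarith)
  have hlim : Tendsto (fun b => 2 * (-J - ∫ z in Ico (-b) (-(b / (1 + b))), halfIntegrand α β z))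
      (𝓝[>] 0) (𝓝 (-2 * J)) := by
    simpa using (hE.const_sub (-J)).const_mul 2
  refine ⟨hlim.congr' ?_, mul_neg_of_neg_of_pos (by norm_num) hJ⟩
  filter_upwards [Ioo_mem_nhdsGT one_pos] with b ⟨hb0, hb1⟩
  exact (setIntegral_annulus_integrand hα1.le hβ hb0 hb1).symm
end
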